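/- arXiv:1203.6703 — 7 statements merged into one kernel-verified Lean document; each statement's English description precedes it below -/
import Mathlib

section
/- For every integer N ≥ 0 and every continuous function g on the circle 𝕋, the N-th partial Fourier sum satisfies ‖S_N(g)‖_{C(𝕋)} ≤ c·‖g‖_{C(𝕋)}·log(N+2), where c > 0 is an absolute constant independent of N and g. -/
open MeasureTheory Filter

/-- The `k`-th Fourier coefficient of a function on the circle, identified with a
`2π`-periodic function on `ℝ`: `f̂(k) = (1/2π) ∫_{-π}^{π} f(t) e^{-ikt} dt`. -/
noncomputable def fourierCoef (f : ℝ → ℂ) (k : ℤ) : ℂ :=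
  (1 / (2 * Real.pi)) * ∫ t in (-Real.pi)..Real.pi, f t * Complex.exp (-(k : ℂ) * Complex.I * t)

/-- The `N`-th partial sum of the Fourier series: `S_N(f)(t) = ∑_{|k| ≤ N} f̂(k) e^{ikt}`. -/
noncomputable def partialFourierSum (f : ℝ → ℂ) (N : ℕ) (t : ℝ) : ℂ :=
  ∑ k ∈ Finset.Icc (-(N : ℤ)) (N : ℤ), fourierCoef f k * Complex.exp ((k : ℂ) * Complex.I * t)

/-- The norm of the space `U(𝕋)`: `‖f‖_U = sup_N ‖S_N(f)‖_{C(𝕋)}`. -/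
noncomputable def uNorm (f : ℝ → ℂ) : ℝ :=
  ⨆ N : ℕ, ⨆ t : ℝ, ‖partialFourierSum f N t‖

/-!
Convolving with the Dirichlet kernel `D_N(u) = ∑_{|k| ≤ N} e^{iku}` gives
`‖S_N g‖_∞ ≤ ‖g‖_∞ · (1/2π) ∫_{-π}^{π} |D_N|`. As a geometric sum, `D_N` satisfies
`|e^{iu} - 1| · |D_N(u)| ≤ 2`, and Jordan's inequality `|e^{iu} - 1| = 2|sin(u/2)| ≥ 2|u|/π`
turns this into `|D_N(u)| ≤ π/|u|`. Using the trivial bound `|D_N| ≤ 2N + 1` for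
`|u| ≤ 1/(N+1)` and `π/|u|` elsewhere, the integral is at most `4 + 2π log(π(N+1))`.
-/

open scoped Real

lemma integral_le_of_le_const_of_le_div {h : ℝ → ℝ} {A C a b : ℝ} (ha : 0 < a) (hab : a ≤ b)
    (hint : IntervalIntegrable h volume 0 b) (hA : ∀ u ∈ Set.Icc 0 a, h u ≤ A)
    (hC : ∀ u ∈ Set.Icc a b, h u ≤ C / u) :
    ∫ u in 0..b, h u ≤ A * a + C * Real.log (b / a) := by
  have hmem : a ∈ Set.uIcc 0 b := Set.mem_uIcc_of_le ha.le hab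
  have hint₀ : IntervalIntegrable h volume 0 a := hint.mono_set (Set.uIcc_subset_uIcc_left hmem)
  have hint₁ : IntervalIntegrable h volume a b := hint.mono_set (Set.uIcc_subset_uIcc_right hmem)
  have hnear : ∫ u in 0..a, h u ≤ A * a := by
    simpa [mul_comm] using intervalIntegral.integral_mono_on ha.le hint₀ intervalIntegrable_const hA
  have hfar : ∫ u in a..b, h u ≤ C * Real.log (b / a) := by
    have hCint : IntervalIntegrable (fun u => C / u) volume a b := by
      refine ContinuousOn.intervalIntegrable fun u hu => ?_
      rw [Set.uIcc_of_le hab] at hu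
      have hu0 : u ≠ 0 := by linarith [hu.1]
      exact (continuousAt_const.div continuousAt_id hu0).continuousWithinAt
    calc ∫ u in a..b, h u ≤ ∫ u in a..b, C / u :=
          intervalIntegral.integral_mono_on hab hint₁ hCint hC
      _ = C * Real.log (b / a) := by
        simp_rw [div_eq_mul_inv C]
        rw [intervalIntegral.integral_const_mul, integral_inv_of_pos ha (ha.trans_le hab)]
  rw [← intervalIntegral.integral_add_adjacent_intervals hint₀ hint₁]
  linarith

noncomputable def dirichletKernel (N : ℕ) (u : ℝ) : ℂ :=
  ∑ k ∈ Finset.Icc (-(N : ℤ)) N, Complex.exp (k * Complex.I * u)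

namespace dirichletKernel

@[fun_prop]
lemma continuous (N : ℕ) : Continuous (dirichletKernel N) := by
  unfold dirichletKernel
  fun_prop

lemma periodic (N : ℕ) : Function.Periodic (dirichletKernel N) (2 * π) := by
  intro u
  refine Finset.sum_congr rfl fun k _ => ?_
  rw [show (k : ℂ) * Complex.I * ↑(u + 2 * π) = k * Complex.I * u + k * (2 * π * Complex.I) by
    push_cast; ring, Complex.exp_add, Complex.exp_int_mul_two_pi_mul_I, mul_one]

lemma eq_zpow_mul_geom_sum (N : ℕ) (u : ℝ) :
    dirichletKernel N u = Complex.exp (Complex.I * u) ^ (-(N : ℤ))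
      * ∑ j ∈ Finset.range (2 * N + 1), Complex.exp (Complex.I * u) ^ j := by
  have hz : Complex.exp (Complex.I * u) ≠ 0 := Complex.exp_ne_zero _
  rw [Finset.mul_sum]
  refine Finset.sum_nbij' (fun k => (k + N).toNat) (fun j => (j : ℤ) - N) ?_ ?_ ?_ ?_ ?_
  all_goals simp only [Finset.mem_Icc, Finset.mem_range]
  · intros; omega
  · intros; omega
  · intros; omega
  · intros; omega
  · intro k hk
    rw [← zpow_natCast, ← zpow_add₀ hz, ← Complex.exp_int_mul]
    congr 1
    push_cast [show ((k + N).toNat : ℤ) = k + N by omega]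
    ring

lemma norm_le (N : ℕ) (u : ℝ) : ‖dirichletKernel N u‖ ≤ 2 * N + 1 := by
  rw [eq_zpow_mul_geom_sum, norm_mul, norm_zpow, Complex.norm_exp_I_mul_ofReal, one_zpow, one_mul]
  calc _ ≤ ∑ j ∈ Finset.range (2 * N + 1), (1 : ℝ) := norm_sum_le_of_le _ fun j _ => by
        rw [norm_pow, Complex.norm_exp_I_mul_ofReal, one_pow]
    _ = 2 * N + 1 := by simp

lemma norm_exp_sub_one_mul_norm_le (N : ℕ) (u : ℝ) :
    ‖Complex.exp (Complex.I * u) - 1‖ * ‖dirichletKernel N u‖ ≤ 2 := by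
  set z := Complex.exp (Complex.I * u)
  have hz : ‖z‖ = 1 := Complex.norm_exp_I_mul_ofReal u
  rw [eq_zpow_mul_geom_sum, norm_mul, norm_zpow, hz, one_zpow, one_mul, ← norm_mul, mul_comm,
    geom_sum_mul]
  calc ‖z ^ (2 * N + 1) - 1‖ ≤ ‖z ^ (2 * N + 1)‖ + ‖(1 : ℂ)‖ := norm_sub_le _ _
    _ = 2 := by rw [norm_pow, hz]; norm_num

lemma norm_le_pi_div_abs (N : ℕ) {u : ℝ} (hu : u ≠ 0) (huπ : |u| ≤ π) :
    ‖dirichletKernel N u‖ ≤ π / |u| := by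
  have hu' : 0 < |u| := abs_pos.mpr hu
  have hsin : 2 / π * |u / 2| ≤ |Real.sin (u / 2)| :=
    Real.mul_abs_le_abs_sin (by rw [abs_div, abs_two]; linarith)
  have hexp : 2 * |u| / π ≤ ‖Complex.exp (Complex.I * u) - 1‖ := by
    rw [Complex.norm_exp_I_mul_ofReal_sub_one, norm_mul, Real.norm_eq_abs, Real.norm_eq_abs,
      abs_two]
    rw [abs_div, abs_two] at hsin
    linarith [show 2 * |u| / π = 2 * (2 / π * (|u| / 2)) by ring]
  rw [le_div_iff₀ hu']
  have := (mul_le_mul_of_nonneg_right hexp (norm_nonneg _)).trans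
    (norm_exp_sub_one_mul_norm_le N u)
  rw [div_mul_eq_mul_div, div_le_iff₀ Real.pi_pos] at this
  linarith

lemma integral_norm_le (N : ℕ) :
    ∫ u in -π..π, ‖dirichletKernel N u‖ ≤ 4 + 2 * π * Real.log (π * (N + 1)) := by
  have hN : (0 : ℝ) < N + 1 := by positivity
  have ha : 0 < (N + 1 : ℝ)⁻¹ := inv_pos.2 hN
  have haπ : (N + 1 : ℝ)⁻¹ ≤ π :=
    (inv_le_one_of_one_le₀ (by simp)).trans (by linarith [Real.pi_gt_three])
  have hnear : (2 * N + 1 : ℝ) * (N + 1 : ℝ)⁻¹ ≤ 2 := by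
    rw [← div_eq_mul_inv, div_le_iff₀ hN]; linarith
  -- `ε = 1` and `ε = -1` give the integrals over `[0, π]` and `[-π, 0]`.
  have half : ∀ ε : ℝ, |ε| = 1 →
      ∫ u in 0..π, ‖dirichletKernel N (ε * u)‖ ≤ 2 + π * Real.log (π * (N + 1)) := by
    intro ε hε
    have habs : ∀ u, 0 ≤ u → |ε * u| = u := fun u hu => by
      rw [abs_mul, hε, one_mul, abs_of_nonneg hu]
    have hcont : Continuous fun u => ‖dirichletKernel N (ε * u)‖ := by fun_prop
    have hfar : ∀ u ∈ Set.Icc (N + 1 : ℝ)⁻¹ π, ‖dirichletKernel N (ε * u)‖ ≤ π / u := by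
      rintro u ⟨hau, huπ⟩
      have hu : 0 ≤ u := ha.le.trans hau
      simpa only [habs u hu] using norm_le_pi_div_abs N (u := ε * u)
        (by rw [← abs_pos, habs u hu]; exact ha.trans_le hau) (by rwa [habs u hu])
    have := integral_le_of_le_const_of_le_div ha haπ (hcont.intervalIntegrable _ _)
      (fun u _ => norm_le N (ε * u)) hfar
    rw [div_inv_eq_mul] at this
    linarith
  have hneg := half (-1) (by simp)
  have hpos := half 1 (by simp)
  simp only [neg_one_mul, one_mul] at hneg hpos
  rw [intervalIntegral.integral_comp_neg (fun u => ‖dirichletKernel N u‖), neg_zero] at hneg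
  have hcont : Continuous fun u => ‖dirichletKernel N u‖ := by fun_prop
  rw [← intervalIntegral.integral_add_adjacent_intervals (b := 0) (hcont.intervalIntegrable _ _)
    (hcont.intervalIntegrable _ _)]
  linarith

end dirichletKernel

lemma partialFourierSum_eq_integral_mul_dirichletKernel {f : ℝ → ℂ}
    (hf : IntervalIntegrable f volume (-π) π) (N : ℕ) (t : ℝ) :
    partialFourierSum f N t = 1 / (2 * π) * ∫ s in -π..π, f s * dirichletKernel N (t - s) := by
  have hexp : ∀ (k : ℤ) (s : ℝ), Complex.exp (-k * Complex.I * s) * Complex.exp (k * Complex.I * t)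
      = Complex.exp (k * Complex.I * ↑(t - s)) := fun k s => by
    rw [← Complex.exp_add]; push_cast; ring_nf
  have hint : ∀ k : ℤ, IntervalIntegrable
      (fun s => f s * Complex.exp (-k * Complex.I * s) * Complex.exp (k * Complex.I * t))
      volume (-π) π := fun k => (hf.mul_continuousOn (by fun_prop)).mul_const _
  simp only [partialFourierSum, fourierCoef, dirichletKernel, Finset.mul_sum, ← hexp, ← mul_assoc]
  rw [intervalIntegral.integral_finsetSum fun k _ => hint k, Finset.mul_sum]
  refine Finset.sum_congr rfl fun k _ => ?_
  rw [intervalIntegral.integral_mul_const, mul_assoc]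

noncomputable def lebesgueConstant (N : ℕ) : ℝ :=
  1 / (2 * π) * ∫ u in -π..π, ‖dirichletKernel N u‖

lemma norm_partialFourierSum_le_mul_lebesgueConstant {f : ℝ → ℂ} {M : ℝ}
    (hf : IntervalIntegrable f volume (-π) π) (hM : ∀ s ∈ Set.Icc (-π) π, ‖f s‖ ≤ M)
    (N : ℕ) (t : ℝ) : ‖partialFourierSum f N t‖ ≤ M * lebesgueConstant N := by
  have hshift :
      ∫ s in -π..π, ‖dirichletKernel N (t - s)‖ = ∫ u in -π..π, ‖dirichletKernel N u‖ := by
    have hper : Function.Periodic (fun u => ‖dirichletKernel N u‖) (2 * π) :=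
      (dirichletKernel.periodic N).comp norm
    rw [intervalIntegral.integral_comp_sub_left (fun u => ‖dirichletKernel N u‖),
      show t - -π = t - π + 2 * π by ring, hper.intervalIntegral_add_eq (t - π) (-π),
      show -π + 2 * π = π by ring]
  have hnorm : ‖(1 / (2 * π) : ℂ)‖ = 1 / (2 * π) := by
    rw [norm_div, norm_one, Complex.norm_mul, Complex.norm_ofNat, Complex.norm_real,
      Real.norm_of_nonneg Real.pi_pos.le]
  rw [partialFourierSum_eq_integral_mul_dirichletKernel hf, norm_mul, hnorm, lebesgueConstant,
    ← hshift, mul_left_comm, ← intervalIntegral.integral_const_mul]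
  gcongr
  refine intervalIntegral.norm_integral_le_of_norm_le (by linarith [Real.pi_pos])
    (ae_of_all _ fun s hs => ?_)
    ((by fun_prop : Continuous fun s => M * ‖dirichletKernel N (t - s)‖).intervalIntegrable _ _)
  rw [norm_mul]
  exact mul_le_mul_of_nonneg_right (hM s (Set.Ioc_subset_Icc_self hs)) (norm_nonneg _)

lemma lebesgueConstant_le_four_mul_log (N : ℕ) : lebesgueConstant N ≤ 4 * Real.log (N + 2) := by
  have hlog2 : Real.log 2 ≤ Real.log (N + 2) := Real.log_le_log two_pos (by simp)
  have hlogπ : Real.log π ≤ 2 * Real.log 2 := by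
    rw [← Real.log_rpow two_pos]
    exact Real.log_le_log Real.pi_pos (by norm_num; exact Real.pi_le_four)
  have hlogN : Real.log (N + 1) ≤ Real.log (N + 2) := Real.log_le_log (by positivity) (by simp)
  have hpi : 2 / π ≤ 2 / 3 := by gcongr; exact Real.pi_gt_three.le
  calc lebesgueConstant N ≤ 1 / (2 * π) * (4 + 2 * π * Real.log (π * (N + 1))) := by
        unfold lebesgueConstant; gcongr; exact dirichletKernel.integral_norm_le N
    _ = 2 / π + Real.log π + Real.log (N + 1) := by
        rw [Real.log_mul Real.pi_pos.ne' (by positivity)]; field_simp; ring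
    -- `2/π + log π ≤ 2/3 + 2 log 2 < 3 log 2 ≤ 3 log (N + 2)`
    _ ≤ 4 * Real.log (N + 2) := by linarith [Real.log_two_gt_d9]

theorem lebesgue_constant_bound :
    ∃ c : ℝ, 0 < c ∧ ∀ (N : ℕ) (g : ℝ → ℂ), Continuous g → Function.Periodic g (2 * Real.pi) →
      ∀ t : ℝ, ‖partialFourierSum g N t‖ ≤ c * (⨆ s : ℝ, ‖g s‖) * Real.log ((N : ℝ) + 2) := by
  refine ⟨4, four_pos, fun N g hg hper t => ?_⟩
  have hbdd : BddAbove (Set.range fun s => ‖g s‖) :=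
    ((hper.comp norm).isBounded_of_continuous (by positivity) hg.norm).bddAbove
  have hsup : ∀ s, ‖g s‖ ≤ ⨆ s, ‖g s‖ := le_ciSup hbdd
  calc ‖partialFourierSum g N t‖ ≤ (⨆ s, ‖g s‖) * lebesgueConstant N :=
        norm_partialFourierSum_le_mul_lebesgueConstant (hg.intervalIntegrable _ _)
          (fun s _ => hsup s) N t
    _ ≤ (⨆ s, ‖g s‖) * (4 * Real.log (N + 2)) :=
        mul_le_mul_of_nonneg_left (lebesgueConstant_le_four_mul_log N)
          ((norm_nonneg _).trans (hsup 0))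
    _ = 4 * (⨆ s, ‖g s‖) * Real.log (N + 2) := by ring
end

section
/- For any integrable function f on the circle 𝕋, any positive integer n, and any integer N ≥ 0, the identity S_N(e_n f) = e_n·S_{N+n}(f) + e_N·f̂(N−n) − e_{N+n}·S_n(e_{−N} f) holds, where e_m(t) = e^{imt}. -/
open MeasureTheory Filter

lemma fourierCoef_modulation (f : ℝ → ℂ) (m k : ℤ) :
    fourierCoef (fun s => Complex.exp ((m : ℂ) * Complex.I * s) * f s) k
      = fourierCoef f (k - m) := by
  unfold fourierCoef
  congr 1
  apply intervalIntegral.integral_congr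
  intro s _
  simp only
  rw [mul_comm (Complex.exp _) (f s), mul_assoc, ← Complex.exp_add]
  push_cast
  ring_nf

lemma fourierCoef_modulation_nat (f : ℝ → ℂ) (n : ℕ) (k : ℤ) :
    fourierCoef (fun s => Complex.exp ((n : ℂ) * Complex.I * s) * f s) k
      = fourierCoef f (k - n) := by
  have := fourierCoef_modulation f (n : ℤ) k
  simpa using this

lemma fourierCoef_modulation_neg_nat (f : ℝ → ℂ) (N : ℕ) (k : ℤ) :
    fourierCoef (fun s => Complex.exp (-(N : ℂ) * Complex.I * s) * f s) k
      = fourierCoef f (k + N) := by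
  have := fourierCoef_modulation f (-(N : ℤ)) k
  simp only [Int.cast_neg, Int.cast_natCast, sub_neg_eq_add] at this
  exact this

theorem partial_sum_modulation_identity (f : ℝ → ℂ)
    (hf : IntervalIntegrable f MeasureTheory.volume (-Real.pi) Real.pi)
    (n : ℕ) (hn : 0 < n) (N : ℕ) (t : ℝ) :
    partialFourierSum (fun s => Complex.exp ((n : ℂ) * Complex.I * s) * f s) N t =
      Complex.exp ((n : ℂ) * Complex.I * t) * partialFourierSum f (N + n) t
        + Complex.exp ((N : ℂ) * Complex.I * t) * fourierCoef f ((N : ℤ) - (n : ℤ))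
        - Complex.exp (((N : ℂ) + (n : ℂ)) * Complex.I * t) *
            partialFourierSum (fun s => Complex.exp (-(N : ℂ) * Complex.I * s) * f s) n t := by
  classical
  set g : ℤ → ℂ := fun j => fourierCoef f j * Complex.exp (((j : ℂ) + (n : ℂ)) * Complex.I * t)
    with hg
  -- LHS as a sum of g over Icc (-(N+n)) (N-n)
  have hLHS : partialFourierSum (fun s => Complex.exp ((n : ℂ) * Complex.I * s) * f s) N t
      = ∑ j ∈ Finset.Icc (-(N + n : ℤ)) ((N : ℤ) - n), g j := by
    unfold partialFourierSum
    have hmap : (Finset.Icc (-(N + n : ℤ)) ((N : ℤ) - n)).map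
        (addRightEmbedding (n : ℤ)) = Finset.Icc (-(N : ℤ)) (N : ℤ) := by
      rw [Finset.map_add_right_Icc]
      congr 1 <;> ring
    rw [← hmap, Finset.sum_map]
    apply Finset.sum_congr rfl
    intro j _
    simp only [addRightEmbedding_apply, hg, fourierCoef_modulation_nat, add_sub_cancel_right]
    push_cast
    ring_nf
  -- first RHS term
  have h1 : Complex.exp ((n : ℂ) * Complex.I * t) * partialFourierSum f (N + n) t
      = ∑ j ∈ Finset.Icc (-(N + n : ℤ)) ((N : ℤ) + n), g j := by
    unfold partialFourierSum
    rw [Finset.mul_sum]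
    apply Finset.sum_congr (by push_cast; ring_nf)
    intro j _
    simp only [hg]
    rw [mul_comm (Complex.exp _), mul_assoc, ← Complex.exp_add]
    ring_nf
  -- second RHS term
  have h2 : Complex.exp ((N : ℂ) * Complex.I * t) * fourierCoef f ((N : ℤ) - (n : ℤ))
      = g ((N : ℤ) - n) := by
    simp only [hg]
    push_cast
    ring_nf
  -- third RHS term
  have h3 : Complex.exp (((N : ℂ) + (n : ℂ)) * Complex.I * t) *
        partialFourierSum (fun s => Complex.exp (-(N : ℂ) * Complex.I * s) * f s) n t
      = ∑ j ∈ Finset.Icc ((N : ℤ) - n) ((N : ℤ) + n), g j := by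
    unfold partialFourierSum
    rw [Finset.mul_sum]
    have hmap : (Finset.Icc ((N : ℤ) - n) ((N : ℤ) + n)).map
        (addRightEmbedding (-(N : ℤ))) = Finset.Icc (-(n : ℤ)) (n : ℤ) := by
      rw [Finset.map_add_right_Icc]
      congr 1 <;> ring
    rw [← hmap, Finset.sum_map]
    apply Finset.sum_congr rfl
    intro j _
    simp only [addRightEmbedding_apply, hg, fourierCoef_modulation_neg_nat]
    have hj : j + -(N : ℤ) + N = j := by ring
    rw [hj]
    rw [mul_comm (Complex.exp _) (fourierCoef f j * _), mul_assoc, ← Complex.exp_add]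
    push_cast
    ring_nf
  rw [hLHS, h1, h2, h3]
  -- now a pure Finset identity
  have hab : (-(N + n : ℤ)) ≤ (N : ℤ) - n := by omega
  have hbc : (N : ℤ) - n ≤ (N : ℤ) + n := by omega
  have hsplit : Finset.Icc (-(N + n : ℤ)) ((N : ℤ) - n) ∪
      Finset.Ioc ((N : ℤ) - n) ((N : ℤ) + n) = Finset.Icc (-(N + n : ℤ)) ((N : ℤ) + n) := by
    rw [← Finset.coe_inj]
    push_cast
    exact Set.Icc_union_Ioc_eq_Icc hab hbc
  have hdisj : Disjoint (Finset.Icc (-(N + n : ℤ)) ((N : ℤ) - n))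
      (Finset.Ioc ((N : ℤ) - n) ((N : ℤ) + n)) := by
    rw [Finset.disjoint_left]
    intro a ha hb
    simp only [Finset.mem_Icc, Finset.mem_Ioc] at ha hb
    omega
  have hsum1 : ∑ j ∈ Finset.Icc (-(N + n : ℤ)) ((N : ℤ) + n), g j
      = (∑ j ∈ Finset.Icc (-(N + n : ℤ)) ((N : ℤ) - n), g j)
        + ∑ j ∈ Finset.Ioc ((N : ℤ) - n) ((N : ℤ) + n), g j := by
    rw [← hsplit, Finset.sum_union hdisj]
  have hins : insert ((N : ℤ) - n) (Finset.Ioc ((N : ℤ) - n) ((N : ℤ) + n))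
      = Finset.Icc ((N : ℤ) - n) ((N : ℤ) + n) := Finset.Ioc_insert_left hbc
  have hsum2 : ∑ j ∈ Finset.Icc ((N : ℤ) - n) ((N : ℤ) + n), g j
      = g ((N : ℤ) - n) + ∑ j ∈ Finset.Ioc ((N : ℤ) - n) ((N : ℤ) + n), g j := by
    rw [← hins, Finset.sum_insert (by simp)]
  rw [hsum1, hsum2]
  ring
end

section
/- Let 0 < ε < π, let α ≠ β be real numbers, and let n be a nonzero integer. Define φ on (−ε, ε) by φ(t) = αt for t ≤ 0 and φ(t) = βt for t ≥ 0, and let Δ_ε(t) = max(0, 1 − |t|/ε). Then for every integer k with k ≠ nα and k ≠ nβ, the Fourier coefficient of Δ_ε·e^{inφ} equals (1/2πi)(1/(nα−k) − 1/(nβ−k)) − (1/iε)[(1/(nα−k))·(e_{nα}1_{(−ε,0)})^(k) − (1/(nβ−k))·(e_{nβ}1_{(0,ε)})^(k)]. -/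
/-!
On `(-ε, 0)` and `(0, ε)` the integrand of the `k`-th coefficient is an affine function times
`e^{i a t}`, with `a = nα - k` resp. `a = nβ - k`, and it vanishes outside `(-ε, ε)`. One
integration by parts on each half produces the boundary terms `±1/(ia)` at `t = 0` (those at
`±ε` vanish with `Δ_ε`), and the slopes `±1/ε` of `Δ_ε` leave `∫ e^{i a t}` over the half, which
is `2π` times the Fourier coefficient of `e_{nα} 1_{(-ε,0)}` resp. `e_{nβ} 1_{(0,ε)}`.
-/

open MeasureTheory Filter

open Complex

theorem integral_affine_mul_cexp {c : ℝ} (hc : c ≠ 0) (p q : ℂ) (s u : ℝ) :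
    ∫ t in s..u, (p + q * t) * exp (I * c * t) =
      ((p + q * u) * exp (I * c * u) - (p + q * s) * exp (I * c * s)) / (I * c)
        - q / (I * c) * ∫ t in s..u, exp (I * c * t) := by
  have hIc : I * c ≠ 0 := mul_ne_zero I_ne_zero (ofReal_ne_zero.mpr hc)
  have hlin (t : ℝ) : HasDerivAt (fun t : ℝ => p + q * t) q t := by
    simpa using ((hasDerivAt_id (t : ℂ)).const_mul q).const_add p |>.comp_ofReal
  have hexp (t : ℝ) : HasDerivAt (fun t : ℝ => exp (I * c * t) / (I * c)) (exp (I * c * t)) t := by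
    have := (((hasDerivAt_id (t : ℂ)).const_mul (I * c)).cexp.div_const (I * c)).comp_ofReal
    simpa [hIc, mul_comm] using this
  rw [intervalIntegral.integral_mul_deriv_eq_deriv_mul (fun t _ => hlin t) (fun t _ => hexp t)
    intervalIntegrable_const ((by fun_prop : Continuous _).intervalIntegrable _ _)]
  rw [intervalIntegral.integral_const_mul, intervalIntegral.integral_div]
  ring

theorem integral_tent_mul_cexp_neg {ε c : ℝ} (hε : 0 < ε) (hc : c ≠ 0) :
    ∫ t in (-ε)..0, ((max 0 (1 - |t| / ε) : ℝ) : ℂ) * exp (I * c * t) =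
      1 / (I * c) - 1 / (I * c * ε) * ∫ t in (-ε)..0, exp (I * c * t) := by
  have hεC : (ε : ℂ) ≠ 0 := ofReal_ne_zero.mpr hε.ne'
  rw [intervalIntegral.integral_congr (g := fun t : ℝ => (1 + 1 / ε * t) * exp (I * c * t)),
    integral_affine_mul_cexp hc]
  · simp only [ofReal_zero, mul_zero, exp_zero]
    push_cast
    field_simp
    ring
  intro t ht
  rw [Set.uIcc_of_le (by linarith)] at ht
  have : max 0 (1 - |t| / ε) = 1 + 1 / ε * t := by
    rw [abs_of_nonpos ht.2, max_eq_right] <;> field_simp <;> linarith [ht.1]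
  simp [this]

theorem integral_tent_mul_cexp_pos {ε c : ℝ} (hε : 0 < ε) (hc : c ≠ 0) :
    ∫ t in (0 : ℝ)..ε, ((max 0 (1 - |t| / ε) : ℝ) : ℂ) * exp (I * c * t) =
      -1 / (I * c) + 1 / (I * c * ε) * ∫ t in (0 : ℝ)..ε, exp (I * c * t) := by
  have hεC : (ε : ℂ) ≠ 0 := ofReal_ne_zero.mpr hε.ne'
  rw [intervalIntegral.integral_congr (g := fun t : ℝ => (1 + -1 / ε * t) * exp (I * c * t)),
    integral_affine_mul_cexp hc]
  · simp only [ofReal_zero, mul_zero, exp_zero]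
    field_simp
    ring
  intro t ht
  rw [Set.uIcc_of_le hε.le] at ht
  have : max 0 (1 - |t| / ε) = 1 + -1 / ε * t := by
    rw [abs_of_nonneg ht.1, max_eq_right] <;> field_simp <;> linarith [ht.2]
  simp [this]

theorem max_zero_one_sub_abs_div_eq_zero {ε t : ℝ} (hε : 0 < ε) (ht : t ∉ Set.Ioo (-ε) ε) :
    max 0 (1 - |t| / ε) = 0 := by
  rw [Set.mem_Ioo, ← abs_lt, not_lt] at ht
  rw [max_eq_left]
  rwa [sub_nonpos, le_div_iff₀ hε, one_mul]

theorem continuous_ite_nonpos_mul (α β : ℝ) :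
    Continuous fun t : ℝ => if t ≤ 0 then α * t else β * t :=
  Continuous.if_le (by fun_prop) (by fun_prop) continuous_id continuous_const
    (fun t ht => by simp [← ht])

theorem ite_nonpos_mul_of_nonneg (α β : ℝ) {t : ℝ} (ht : 0 ≤ t) :
    (if t ≤ 0 then α * t else β * t) = β * t := by
  split_ifs with h
  · simp [le_antisymm h ht]
  · rfl

theorem integral_mul_cexp_phase_of_eqOn_linear {s u c : ℝ} {φ : ℝ → ℝ}
    (hφ : ∀ t ∈ Set.uIcc s u, φ t = c * t) (w : ℝ → ℂ) (n k : ℤ) :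
    ∫ t in s..u, w t * exp (I * n * (φ t : ℂ)) * exp (-(k : ℂ) * I * t) =
      ∫ t in s..u, w t * exp (I * (n * c - k : ℝ) * t) := by
  refine intervalIntegral.integral_congr fun t ht => ?_
  rw [hφ t ht, mul_assoc, ← exp_add]
  push_cast
  ring_nf

theorem cexp_mul_cexp_neg_intCast (c t : ℝ) (k : ℤ) :
    exp (I * (c * t : ℝ)) * exp (-(k : ℂ) * I * t) = exp (I * (c - k : ℝ) * t) := by
  rw [← exp_add]
  push_cast
  ring_nf

theorem fourierCoef_ite_Ioo {s u : ℝ} (hs : -Real.pi ≤ s) (hsu : s ≤ u) (hu : u ≤ Real.pi)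
    (f : ℝ → ℂ) (k : ℤ) :
    fourierCoef (fun t => if t ∈ Set.Ioo s u then f t else 0) k
      = 1 / (2 * Real.pi) * ∫ t in s..u, f t * exp (-(k : ℂ) * I * t) := by
  have hsub : Set.Ioo s u ⊆ Set.Ioc (-Real.pi) Real.pi :=
    fun t ht => ⟨by linarith [ht.1], by linarith [ht.2]⟩
  simp only [fourierCoef, ite_mul, zero_mul]
  simp_rw [← Set.indicator_apply (Set.Ioo s u) (fun t => f t * exp (-(k : ℂ) * I * t))]
  rw [intervalIntegral.integral_of_le (by linarith), setIntegral_indicator measurableSet_Ioo,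
    Set.inter_eq_self_of_subset_right hsub, ← integral_Ioc_eq_integral_Ioo,
    ← intervalIntegral.integral_of_le hsu]

theorem fourierCoef_eq_of_eq_zero_off {s u : ℝ} (hs : -Real.pi ≤ s) (hsu : s ≤ u)
    (hu : u ≤ Real.pi) {f : ℝ → ℂ} (hf : ∀ t ∉ Set.Ioo s u, f t = 0) (k : ℤ) :
    fourierCoef f k = 1 / (2 * Real.pi) * ∫ t in s..u, f t * exp (-(k : ℂ) * I * t) := by
  rw [← fourierCoef_ite_Ioo hs hsu hu]
  congr 1
  ext t
  split_ifs with ht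
  · rfl
  · exact hf t ht

theorem triangle_exp_fourier_coef_formula_general (ε α β : ℝ) (hε0 : 0 < ε) (hεπ : ε < Real.pi)
    (n : ℤ) (k : ℤ)
    (hkα : (k : ℝ) ≠ (n : ℝ) * α) (hkβ : (k : ℝ) ≠ (n : ℝ) * β) :
    fourierCoef (fun t => ((max 0 (1 - |t| / ε) : ℝ) : ℂ) *
        Complex.exp (Complex.I * (n : ℂ) * (if t ≤ 0 then α * t else β * t : ℝ))) k =
      (1 / (2 * (Real.pi : ℂ) * Complex.I)) *
          ((1 / (((n : ℝ) * α - (k : ℝ) : ℝ) : ℂ)) - (1 / (((n : ℝ) * β - (k : ℝ) : ℝ) : ℂ)))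
        - (1 / (Complex.I * (ε : ℂ))) *
          ((1 / (((n : ℝ) * α - (k : ℝ) : ℝ) : ℂ)) *
              fourierCoef (fun t => if t ∈ Set.Ioo (-ε) 0 then
                Complex.exp (Complex.I * ((n : ℝ) * α * t : ℝ)) else 0) k
            - (1 / (((n : ℝ) * β - (k : ℝ) : ℝ) : ℂ)) *
              fourierCoef (fun t => if t ∈ Set.Ioo 0 ε then
                Complex.exp (Complex.I * ((n : ℝ) * β * t : ℝ)) else 0) k) := by
  have ha : (n * α - k : ℝ) ≠ 0 := sub_ne_zero.mpr hkα.symm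
  have hb : (n * β - k : ℝ) ≠ 0 := sub_ne_zero.mpr hkβ.symm
  have hint : Continuous fun t : ℝ => ((max 0 (1 - |t| / ε) : ℝ) : ℂ) *
      exp (I * n * (if t ≤ 0 then α * t else β * t : ℝ)) * exp (-(k : ℂ) * I * t) := by
    have := continuous_ite_nonpos_mul α β
    fun_prop
  rw [fourierCoef_eq_of_eq_zero_off (s := -ε) (u := ε) (by linarith) (by linarith) hεπ.le
      (fun t ht => by simp [max_zero_one_sub_abs_div_eq_zero hε0 ht]),
    ← intervalIntegral.integral_add_adjacent_intervals (b := 0) (hint.intervalIntegrable _ _)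
      (hint.intervalIntegrable _ _),
    integral_mul_cexp_phase_of_eqOn_linear (c := α)
      (fun t ht => if_pos (Set.uIcc_of_le (neg_nonpos.mpr hε0.le) ▸ ht).2),
    integral_mul_cexp_phase_of_eqOn_linear (c := β)
      (fun t ht => ite_nonpos_mul_of_nonneg α β (Set.uIcc_of_le hε0.le ▸ ht).1),
    integral_tent_mul_cexp_neg hε0 ha, integral_tent_mul_cexp_pos hε0 hb,
    fourierCoef_ite_Ioo (by linarith) (by linarith) (by linarith),
    fourierCoef_ite_Ioo (by linarith) hε0.le hεπ.le]
  simp only [cexp_mul_cexp_neg_intCast]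
  field_simp
  ring

theorem triangle_exp_fourier_coef_formula (ε α β : ℝ) (hε0 : 0 < ε) (hεπ : ε < Real.pi)
    (hαβ : α ≠ β) (n : ℤ) (hn : n ≠ 0) (k : ℤ)
    (hkα : (k : ℝ) ≠ (n : ℝ) * α) (hkβ : (k : ℝ) ≠ (n : ℝ) * β) :
    fourierCoef (fun t => ((max 0 (1 - |t| / ε) : ℝ) : ℂ) *
        Complex.exp (Complex.I * (n : ℂ) * (if t ≤ 0 then α * t else β * t : ℝ))) k =
      (1 / (2 * (Real.pi : ℂ) * Complex.I)) *
          ((1 / (((n : ℝ) * α - (k : ℝ) : ℝ) : ℂ)) - (1 / (((n : ℝ) * β - (k : ℝ) : ℝ) : ℂ)))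
        - (1 / (Complex.I * (ε : ℂ))) *
          ((1 / (((n : ℝ) * α - (k : ℝ) : ℝ) : ℂ)) *
              fourierCoef (fun t => if t ∈ Set.Ioo (-ε) 0 then
                Complex.exp (Complex.I * ((n : ℝ) * α * t : ℝ)) else 0) k
            - (1 / (((n : ℝ) * β - (k : ℝ) : ℝ) : ℂ)) *
              fourierCoef (fun t => if t ∈ Set.Ioo 0 ε then
                Complex.exp (Complex.I * ((n : ℝ) * β * t : ℝ)) else 0) k) :=
  triangle_exp_fourier_coef_formula_general ε α β hε0 hεπ n k hkα hkβ
end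

section
/- Let 0 < ε < π and α > 0, |β| > α with α, β real, and let φ(t) = αt for t ∈ (−ε, 0], φ(t) = βt for t ∈ [0, ε). Let Δ_ε(t) = max(0, 1 − |t|/ε). Then for every integer n with nα ≥ 2, setting N = ⌊nα⌋ − 1, one has |S_N(Δ_ε e^{inφ})(0)| ≥ (1/2π)(log(nα/2) − 3α/(|β|−α)) − 4ε^{−1/2}. -/
open MeasureTheory Filter

/-! On `[-ε, 0]` and on `[0, ε]` the function is a linear ramp times a pure exponential, so its
Fourier coefficients are explicit: with `l = nα - k` and `m = nβ - k`,
`2π f̂(k) = -i/l + i/m + O(ε^{-1/2} (|l|^{-3/2} + |m|^{-3/2}))`.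
Summing over `|k| ≤ N`: since `N + 1 ≤ nα < N + 2`, the terms `1/(nα - k)` form a shifted harmonic
sum of size at least `log (nα/2)`; since `|nβ| - N ≥ n(|β| - α)`, the `2N + 1` terms `1/(nβ - k)`
sum to at most `3α/(|β| - α)`; and the remainders are summable in `k`. -/

open Finset Complex

lemma sum_Icc_neg_eq_sum_range {M : Type*} [AddCommMonoid M] (N : ℕ) (g : ℤ → M) :
    ∑ k ∈ Icc (-(N : ℤ)) N, g k = ∑ j ∈ range (2 * N + 1), g (N - j) := by
  apply sum_nbij' (fun k => ((N : ℤ) - k).toNat) (fun j => (N : ℤ) - j) <;>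
    intro a ha <;> simp only [mem_Icc, mem_range] at ha ⊢ <;> try omega
  congr 1; omega

lemma sum_Icc_neg_comp_neg {M : Type*} [AddCommMonoid M] (N : ℕ) (g : ℤ → M) :
    ∑ k ∈ Icc (-(N : ℤ)) N, g (-k) = ∑ k ∈ Icc (-(N : ℤ)) N, g k := by
  apply sum_nbij' Neg.neg Neg.neg <;>
    intro a ha <;> simp only [mem_Icc, neg_neg] at ha ⊢ <;> omega

lemma sub_le_abs_sub_intCast {N : ℕ} {k : ℤ} (hk : k ∈ Icc (-(N : ℤ)) N) (y : ℝ) :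
    |y| - N ≤ |y - k| := by
  have : |(k : ℝ)| ≤ N := by
    rw [mem_Icc] at hk
    exact abs_le.2 ⟨by exact_mod_cast hk.1, by exact_mod_cast hk.2⟩
  linarith [abs_sub_abs_le_abs_sub y k]

lemma log_div_le_sum_range_inv (M : ℕ) {δ : ℝ} (hδ : 0 < δ) :
    Real.log ((δ + M) / δ) ≤ ∑ j ∈ range M, 1 / (δ + j) := by
  rw [← integral_one_div_of_pos hδ (by positivity)]
  exact AntitoneOn.integral_le_sum fun a ha b _ hab =>
    one_div_le_one_div_of_le (hδ.trans_le ha.1) hab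

lemma log_half_le_sum_Icc_inv (N : ℕ) {x : ℝ} (h1 : N + 1 ≤ x) (h2 : x ≤ N + 2) :
    Real.log (x / 2) ≤ ∑ k ∈ Icc (-(N : ℤ)) N, 1 / (x - k) := by
  have hδ : 0 < x - N := by linarith
  calc Real.log (x / 2) ≤ Real.log ((x - N + ((2 * N + 1 : ℕ) : ℝ)) / (x - N)) := by
        apply Real.log_le_log (by linarith)
        rw [div_le_div_iff₀ (by norm_num) hδ]
        push_cast
        nlinarith
    _ ≤ ∑ j ∈ range (2 * N + 1), 1 / (x - N + j) := log_div_le_sum_range_inv _ hδ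
    _ = ∑ k ∈ Icc (-(N : ℤ)) N, 1 / (x - k) := by
        rw [sum_Icc_neg_eq_sum_range]
        push_cast
        ring_nf

lemma abs_sum_Icc_inv_sub_le (N : ℕ) {y : ℝ} (hy : N < |y|) :
    |∑ k ∈ Icc (-(N : ℤ)) N, 1 / (y - k)| ≤ (2 * N + 1) / (|y| - N) := by
  calc |∑ k ∈ Icc (-(N : ℤ)) N, 1 / (y - k)| ≤ ∑ k ∈ Icc (-(N : ℤ)) N, |1 / (y - k)| :=
        abs_sum_le_sum_abs _ _
    _ ≤ ∑ _k ∈ Icc (-(N : ℤ)) N, 1 / (|y| - N) := by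
        refine sum_le_sum fun k hk => ?_
        rw [abs_div, abs_one]
        exact one_div_le_one_div_of_le (by linarith) (sub_le_abs_sub_intCast hk y)
    _ = (2 * N + 1) / (|y| - N) := by
        rw [sum_const, Int.card_Icc, nsmul_eq_mul, mul_one_div]
        congr 1
        rw [show (N : ℤ) + 1 - -N = ((2 * N + 1 : ℕ) : ℤ) by push_cast; ring, Int.toNat_natCast]
        push_cast; ring

lemma abs_sum_Icc_inv_mul_sub_le {N : ℕ} {n α β : ℝ} (hn : 0 < n) (hα : 0 < α) (hβ : α < |β|)
    (hN : N + 1 ≤ n * α) :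
    |∑ k ∈ Icc (-(N : ℤ)) N, 1 / (n * β - k)| ≤ 3 * α / (|β| - α) := by
  have hnβ : |n * β| = n * |β| := by rw [abs_mul, abs_of_pos hn]
  refine (abs_sum_Icc_inv_sub_le N (by nlinarith)).trans ?_
  rw [hnβ, div_le_div_iff₀ (by nlinarith) (by linarith)]
  nlinarith [mul_le_mul_of_nonneg_left hN (sub_pos.2 hβ).le]

lemma inv_mul_sqrt_le_sub {m : ℝ} (hm : 0 < m) :
    1 / ((m + 1) * √(m + 1)) ≤ 2 / √m - 2 / √(m + 1) := by
  have ha : 0 < √m := Real.sqrt_pos.2 hm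
  have hb : 0 < √(m + 1) := Real.sqrt_pos.2 (by linarith)
  have hab : √m ≤ √(m + 1) := Real.sqrt_le_sqrt (by linarith)
  have ha2 : √m * √m = m := Real.mul_self_sqrt hm.le
  have hb2 : √(m + 1) * √(m + 1) = m + 1 := Real.mul_self_sqrt (by linarith)
  rw [div_sub_div _ _ ha.ne' hb.ne', div_le_div_iff₀ (by positivity) (by positivity)]
  nlinarith [sq_nonneg (√(m + 1) - √m), mul_pos ha hb]

lemma sum_range_inv_mul_sqrt_le (M : ℕ) :
    ∑ j ∈ range M, 1 / ((j + 1 : ℝ) * √(j + 1)) ≤ 3 := by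
  rcases M.eq_zero_or_pos with rfl | hM
  · norm_num
  have htele : ∑ j ∈ range M, 1 / ((j + 1 : ℝ) * √(j + 1)) ≤ 3 - 2 / √M := by
    induction M, hM using Nat.le_induction with
    | base => norm_num
    | succ m hm ih =>
      rw [sum_range_succ]
      have := inv_mul_sqrt_le_sub (m := m) (by exact_mod_cast hm)
      push_cast
      linarith
  linarith [show 0 ≤ 2 / √(M : ℝ) by positivity]

lemma sum_Icc_inv_mul_sqrt_abs_sub_le (N : ℕ) {x : ℝ} (hx : N + 1 ≤ |x|) :
    ∑ k ∈ Icc (-(N : ℤ)) N, 1 / (|x - k| * √|x - k|) ≤ 3 := by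
  have hpos : ∀ y : ℝ, N + 1 ≤ y → ∑ k ∈ Icc (-(N : ℤ)) N, 1 / (|y - k| * √|y - k|) ≤ 3 := by
    intro y hy
    calc ∑ k ∈ Icc (-(N : ℤ)) N, 1 / (|y - k| * √|y - k|)
        ≤ ∑ k ∈ Icc (-(N : ℤ)) N, 1 / ((N + 1 - k) * √(N + 1 - k)) := by
          refine sum_le_sum fun k hk => ?_
          have hkN : (k : ℝ) ≤ N := by exact_mod_cast (mem_Icc.1 hk).2
          have hle : (N + 1 - k : ℝ) ≤ |y - k| := by rw [abs_of_pos (by linarith)]; linarith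
          have : (1 : ℝ) ≤ N + 1 - k := by linarith
          gcongr
      _ = ∑ j ∈ range (2 * N + 1), 1 / ((j + 1 : ℝ) * √(j + 1)) := by
          rw [sum_Icc_neg_eq_sum_range]
          push_cast
          ring_nf
      _ ≤ 3 := sum_range_inv_mul_sqrt_le _
  rcases le_or_gt 0 x with hx0 | hx0
  · exact hpos x (by rwa [abs_of_nonneg hx0] at hx)
  · rw [← sum_Icc_neg_comp_neg]
    convert hpos (-x) (by rwa [abs_of_neg hx0] at hx) using 3 with k
    push_cast
    rw [← abs_neg (-x - k)]
    ring_nf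

lemma sub_sub_abs_sub_norm_le_norm_I_mul_add (A B : ℝ) (R : ℂ) :
    A - |B| - ‖R‖ ≤ ‖I * ((B - A : ℝ) : ℂ) + R‖ := by
  have := norm_sub_norm_le (I * ((B - A : ℝ) : ℂ)) (-R)
  rw [sub_neg_eq_add, norm_neg, norm_mul, norm_I, one_mul, norm_real, Real.norm_eq_abs] at this
  linarith [abs_sub_comm B A, le_abs_self A, abs_sub_abs_le_abs_sub A B]

noncomputable def tentRemainder (ε l : ℝ) : ℂ :=
  (1 - exp (l * I * ε)) / (ε * l ^ 2)

lemma norm_one_sub_exp_mul_I_le (x : ℝ) : ‖1 - exp (x * I)‖ ≤ 2 * √|x| := by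
  have h2 : ‖1 - exp (x * I)‖ ≤ 2 := by
    calc ‖1 - exp (x * I)‖ ≤ ‖(1 : ℂ)‖ + ‖exp (x * I)‖ := norm_sub_le _ _
      _ = 2 := by rw [norm_exp_ofReal_mul_I]; norm_num
  have hx : ‖1 - exp (x * I)‖ ≤ |x| := by
    rw [norm_sub_rev, mul_comm]
    exact Real.norm_eq_abs x ▸ Real.norm_exp_I_mul_ofReal_sub_one_le
  rw [show 2 * √|x| = √(4 * |x|) by
    rw [Real.sqrt_mul (by norm_num), show (4 : ℝ) = 2 ^ 2 by norm_num, Real.sqrt_sq (by norm_num)]]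
  apply Real.le_sqrt_of_sq_le
  nlinarith [norm_nonneg (1 - exp (x * I))]

lemma norm_tentRemainder_le {ε : ℝ} (hε : 0 < ε) (l : ℝ) :
    ‖tentRemainder ε l‖ ≤ 2 / (√ε * (|l| * √|l|)) := by
  rcases eq_or_ne l 0 with rfl | hl
  · simp [tentRemainder]
  have hnum := norm_one_sub_exp_mul_I_le (l * ε)
  rw [Complex.ofReal_mul, ← mul_right_comm, abs_mul, abs_of_pos hε,
    Real.sqrt_mul (abs_nonneg l)] at hnum
  have hden : ‖(ε : ℂ) * (l : ℂ) ^ 2‖ = √ε * √ε * ((|l| * √|l|) * √|l|) := by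
    rw [mul_assoc |l|, Real.mul_self_sqrt (abs_nonneg l), Real.mul_self_sqrt hε.le, norm_mul,
      norm_pow, Complex.norm_real, Complex.norm_real, Real.norm_of_nonneg hε.le,
      Real.norm_eq_abs, sq_abs, sq, abs_mul_abs_self]
  have hs : 0 < √|l| := Real.sqrt_pos.2 (abs_pos.2 hl)
  have hse : 0 < √ε := Real.sqrt_pos.2 hε
  rw [tentRemainder, norm_div, hden, div_le_div_iff₀ (by positivity) (by positivity)]
  calc ‖1 - exp (l * I * ε)‖ * (√ε * (|l| * √|l|))
      ≤ 2 * (√|l| * √ε) * (√ε * (|l| * √|l|)) := by gcongr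
    _ = 2 * (√ε * √ε * ((|l| * √|l|) * √|l|)) := by ring

lemma norm_sum_tentRemainder_le {ε : ℝ} (hε : 0 < ε) {N : ℕ} {x y : ℝ} (hx : N + 1 ≤ |x|)
    (hy : N + 1 ≤ |y|) :
    ‖∑ k ∈ Icc (-(N : ℤ)) N, (tentRemainder ε (-(x - k)) + tentRemainder ε (y - k))‖
      ≤ 12 / √ε := by
  calc ‖∑ k ∈ Icc (-(N : ℤ)) N, (tentRemainder ε (-(x - k)) + tentRemainder ε (y - k))‖
      ≤ ∑ k ∈ Icc (-(N : ℤ)) N, (2 / √ε * (1 / (|x - k| * √|x - k|))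
          + 2 / √ε * (1 / (|y - k| * √|y - k|))) := by
        refine (norm_sum_le _ _).trans (sum_le_sum fun k _ => (norm_add_le _ _).trans ?_)
        have hx' := norm_tentRemainder_le hε (-(x - k))
        have hy' := norm_tentRemainder_le hε (y - k)
        rw [abs_neg] at hx'
        rw [div_mul_div_comm, div_mul_div_comm, mul_one]
        exact add_le_add hx' hy'
    _ = 2 / √ε * (∑ k ∈ Icc (-(N : ℤ)) N, 1 / (|x - k| * √|x - k|)
          + ∑ k ∈ Icc (-(N : ℤ)) N, 1 / (|y - k| * √|y - k|)) := by
        rw [sum_add_distrib, ← mul_sum, ← mul_sum, mul_add]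
    _ ≤ 2 / √ε * (3 + 3) := by
        gcongr
        exacts [sum_Icc_inv_mul_sqrt_abs_sub_le N hx, sum_Icc_inv_mul_sqrt_abs_sub_le N hy]
    _ = 12 / √ε := by ring

lemma integral_one_sub_div_mul_exp {ε l : ℝ} (hε : 0 < ε) (hl : l ≠ 0) :
    ∫ t in (0 : ℝ)..ε, (1 - (t : ℂ) / ε) * exp (l * I * t) = I / l + tentRemainder ε l := by
  have hl' : (l : ℂ) ≠ 0 := ofReal_ne_zero.2 hl
  have hε' : (ε : ℂ) ≠ 0 := ofReal_ne_zero.2 hε.ne'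
  set F : ℝ → ℂ := fun s => ((1 - (s : ℂ) / ε) / (l * I) + 1 / (ε * (l * I) ^ 2)) * exp (l * I * s)
  have hF : ∀ t : ℝ, HasDerivAt F ((1 - (t : ℂ) / ε) * exp (l * I * t)) t := by
    intro t
    have hexp : HasDerivAt (fun s : ℝ => exp (l * I * s)) (l * I * exp (l * I * t)) t := by
      simpa [mul_comm] using ((hasDerivAt_id (t : ℂ)).const_mul ((l : ℂ) * I)).cexp.comp_ofReal
    have hlin : HasDerivAt (fun s : ℝ => (1 - (s : ℂ) / ε) / (l * I) + 1 / (ε * (l * I) ^ 2))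
        (-(1 / ε) / (l * I)) t := by
      simpa using (((hasDerivAt_id (t : ℂ)).comp_ofReal.div_const (ε : ℂ)).const_sub 1).div_const
        ((l : ℂ) * I) |>.add_const (1 / ((ε : ℂ) * (l * I) ^ 2))
    refine (hlin.mul hexp).congr_deriv ?_
    field_simp
    ring
  rw [intervalIntegral.integral_eq_sub_of_hasDerivAt (fun t _ => hF t)
    (Continuous.intervalIntegrable (by fun_prop) _ _)]
  simp only [F, tentRemainder, ofReal_zero, mul_zero, exp_zero, div_self hε', sub_self, zero_div,
    zero_add, sub_zero, mul_one]
  rw [mul_pow, I_sq, one_div ((l : ℂ) * I), mul_inv, inv_I]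
  field_simp
  ring

lemma integral_one_add_div_mul_exp {ε l : ℝ} (hε : 0 < ε) (hl : l ≠ 0) :
    ∫ t in -ε..0, (1 + (t : ℂ) / ε) * exp (l * I * t) = -(I / l) + tentRemainder ε (-l) := by
  rw [← neg_zero, ← intervalIntegral.integral_comp_neg]
  convert integral_one_sub_div_mul_exp hε (neg_ne_zero.2 hl) using 1
  · congr 1 with t
    push_cast
    ring_nf
  · push_cast
    ring

lemma fourierCoef_eq_of_eq_zero_of_le_abs {f : ℝ → ℂ} (hf : Continuous f) {ε : ℝ} (hε0 : 0 ≤ ε)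
    (hεπ : ε ≤ Real.pi) (hsupp : ∀ t, ε ≤ |t| → f t = 0) (k : ℤ) :
    fourierCoef f k = (1 / (2 * Real.pi)) *
      ((∫ t in -ε..0, f t * exp (-(k : ℂ) * I * t)) +
        ∫ t in 0..ε, f t * exp (-(k : ℂ) * I * t)) := by
  set g : ℝ → ℂ := fun t => f t * exp (-(k : ℂ) * I * t)
  have hg : ∀ a b : ℝ, IntervalIntegrable g volume a b := fun a b =>
    (hf.mul (by fun_prop)).intervalIntegrable a b
  have hzero : ∀ a b : ℝ, (∀ t ∈ Set.uIcc a b, ε ≤ |t|) → ∫ t in a..b, g t = 0 := by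
    intro a b hab
    rw [intervalIntegral.integral_congr (g := fun _ => 0) fun t ht => by
      simp [g, hsupp t (hab t ht)], intervalIntegral.integral_zero]
  have hleft := hzero (-Real.pi) (-ε) fun t ht => by
    rw [Set.uIcc_of_le (by linarith)] at ht
    rw [abs_of_nonpos (by linarith [ht.2])]
    linarith [ht.2]
  have hright := hzero ε Real.pi fun t ht => by
    rw [Set.uIcc_of_le hεπ] at ht
    rw [abs_of_nonneg (by linarith [ht.1])]
    exact ht.1
  have hsplit : ∫ t in -Real.pi..Real.pi, g t = (∫ t in -Real.pi..-ε, g t) +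
      (∫ t in -ε..0, g t) + (∫ t in 0..ε, g t) + ∫ t in ε..Real.pi, g t := by
    rw [intervalIntegral.integral_add_adjacent_intervals (hg _ _) (hg _ _),
      intervalIntegral.integral_add_adjacent_intervals (hg _ _) (hg _ _),
      intervalIntegral.integral_add_adjacent_intervals (hg _ _) (hg _ _)]
  rw [fourierCoef, hsplit, hleft, hright, zero_add, add_zero]

lemma partialFourierSum_zero (f : ℝ → ℂ) (N : ℕ) :
    partialFourierSum f N 0 = ∑ k ∈ Icc (-(N : ℤ)) N, fourierCoef f k := by
  simp [partialFourierSum]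

/-- The function `Δ_ε e^{inφ}` of the statement. -/
noncomputable def tentPhase (ε α β : ℝ) (n : ℤ) (t : ℝ) : ℂ :=
  ((max 0 (1 - |t| / ε) : ℝ) : ℂ) *
    exp (I * (n : ℂ) * (if t ≤ 0 then α * t else β * t : ℝ))

section tentPhase

variable {ε : ℝ} (α β : ℝ) (n : ℤ)

lemma continuous_tentPhase : Continuous (tentPhase ε α β n) := by
  have hphase : Continuous fun t : ℝ => if t ≤ 0 then α * t else β * t :=
    Continuous.if_le (by fun_prop) (by fun_prop) continuous_id continuous_const
      fun t ht => by simp [ht]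
  unfold tentPhase
  fun_prop

lemma tentPhase_eq_zero {t : ℝ} (hε : 0 < ε) (ht : ε ≤ |t|) : tentPhase ε α β n t = 0 := by
  have : 1 ≤ |t| / ε := (le_div_iff₀ hε).2 (by linarith)
  simp [tentPhase, max_eq_left (by linarith : 1 - |t| / ε ≤ 0)]

lemma tentPhase_mul_exp_of_nonpos (k : ℤ) {t : ℝ} (hε : 0 < ε) (ht : t ∈ Set.Icc (-ε) 0) :
    tentPhase ε α β n t * exp (-(k : ℂ) * I * t)
      = (1 + (t : ℂ) / ε) * exp (((n * α - k : ℝ) : ℂ) * I * t) := by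
  have hmax : max 0 (1 - |t| / ε) = 1 + t / ε := by
    have : -1 ≤ t / ε := (le_div_iff₀ hε).2 (by linarith [ht.1])
    rw [abs_of_nonpos ht.2, neg_div, sub_neg_eq_add]
    exact max_eq_right (by linarith)
  rw [tentPhase, if_pos ht.2, hmax, mul_assoc, ← exp_add]
  push_cast
  ring_nf

lemma tentPhase_mul_exp_of_nonneg (k : ℤ) {t : ℝ} (hε : 0 < ε) (ht : t ∈ Set.Icc 0 ε) :
    tentPhase ε α β n t * exp (-(k : ℂ) * I * t)
      = (1 - (t : ℂ) / ε) * exp (((n * β - k : ℝ) : ℂ) * I * t) := by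
  have hmax : max 0 (1 - |t| / ε) = 1 - t / ε := by
    rw [abs_of_nonneg ht.1, max_eq_right]
    linarith [(div_le_one hε).2 ht.2]
  rcases ht.1.eq_or_lt with rfl | htpos
  · simp [tentPhase]
  rw [tentPhase, if_neg (not_le.2 htpos), hmax, mul_assoc, ← exp_add]
  push_cast
  ring_nf

lemma fourierCoef_tentPhase (hε0 : 0 < ε) (hεπ : ε < Real.pi) {k : ℤ}
    (hα : (n * α - k : ℝ) ≠ 0) (hβ : (n * β - k : ℝ) ≠ 0) :
    fourierCoef (tentPhase ε α β n) k = (1 / (2 * Real.pi)) *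
      ((-(I / (n * α - k : ℝ)) + tentRemainder ε (-(n * α - k)))
        + (I / (n * β - k : ℝ) + tentRemainder ε (n * β - k))) := by
  rw [fourierCoef_eq_of_eq_zero_of_le_abs (continuous_tentPhase α β n) hε0.le hεπ.le
      (fun t ht => tentPhase_eq_zero α β n hε0 ht),
    intervalIntegral.integral_congr fun t ht =>
      tentPhase_mul_exp_of_nonpos α β n k hε0 (Set.uIcc_of_le (neg_nonpos.2 hε0.le) ▸ ht),
    intervalIntegral.integral_congr fun t ht =>
      tentPhase_mul_exp_of_nonneg α β n k hε0 (Set.uIcc_of_le hε0.le ▸ ht),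
    integral_one_add_div_mul_exp hε0 hα, integral_one_sub_div_mul_exp hε0 hβ]

lemma partialFourierSum_tentPhase_zero {N : ℕ} (hε0 : 0 < ε) (hεπ : ε < Real.pi)
    (hα : N < |n * α|) (hβ : N < |n * β|) :
    partialFourierSum (tentPhase ε α β n) N 0 = (1 / (2 * Real.pi)) *
      (I * ((∑ k ∈ Icc (-(N : ℤ)) N, 1 / (n * β - k) -
          ∑ k ∈ Icc (-(N : ℤ)) N, 1 / (n * α - k) : ℝ) : ℂ) +
        ∑ k ∈ Icc (-(N : ℤ)) N,
          (tentRemainder ε (-(n * α - k)) + tentRemainder ε (n * β - k))) := by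
  have hne : ∀ y : ℝ, N < |y| → ∀ k ∈ Icc (-(N : ℤ)) N, y - k ≠ 0 := fun y hy k hk => by
    rw [← abs_pos]
    linarith [sub_le_abs_sub_intCast hk y]
  rw [partialFourierSum_zero, sum_congr rfl fun k hk =>
    fourierCoef_tentPhase α β n hε0 hεπ (hne _ hα k hk) (hne _ hβ k hk), ← mul_sum]
  congr 1
  push_cast
  rw [mul_sub, mul_sum, mul_sum, ← sum_sub_distrib, ← sum_add_distrib]
  refine sum_congr rfl fun k _ => ?_
  ring

end tentPhase

theorem partial_sum_lower_bound_case_one (ε α β : ℝ) (hε0 : 0 < ε) (hεπ : ε < Real.pi)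
    (hα : 0 < α) (hβ : α < |β|) (n : ℤ) (hna : 2 ≤ (n : ℝ) * α)
    (N : ℕ) (hN : (N : ℤ) = ⌊(n : ℝ) * α⌋ - 1) :
    (1 / (2 * Real.pi)) * (Real.log ((n : ℝ) * α / 2) - 3 * α / (|β| - α))
        - 4 / Real.sqrt ε ≤
      ‖partialFourierSum (fun t => ((max 0 (1 - |t| / ε) : ℝ) : ℂ) *
        Complex.exp (Complex.I * (n : ℂ) * (if t ≤ 0 then α * t else β * t : ℝ))) N 0‖ := by
  have hNc : (N : ℝ) = ⌊(n : ℝ) * α⌋ - 1 := by exact_mod_cast hN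
  have hN1 : (N : ℝ) + 1 ≤ n * α := by linarith [Int.floor_le ((n : ℝ) * α)]
  have hN2 : (n : ℝ) * α ≤ N + 2 := by linarith [Int.lt_floor_add_one ((n : ℝ) * α)]
  have hn : (0 : ℝ) < n := pos_of_mul_pos_left (by linarith) hα.le
  have hNα : (N : ℝ) + 1 ≤ |n * α| := hN1.trans (le_abs_self _)
  have hNβ : (N : ℝ) + 1 ≤ |n * β| := hN1.trans (by rw [abs_mul, abs_of_pos hn]; gcongr)
  have hA := log_half_le_sum_Icc_inv N hN1 hN2
  have hB := abs_sum_Icc_inv_mul_sub_le hn hα hβ hN1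
  have hR := norm_sum_tentRemainder_le hε0 hNα hNβ
  have hπ : 1 / (2 * Real.pi) * (12 / √ε) ≤ 4 / √ε := by
    rw [div_mul_div_comm, one_mul, div_le_div_iff₀ (by positivity) (by positivity)]
    nlinarith [Real.pi_gt_three, Real.sqrt_pos.2 hε0]
  change _ ≤ ‖partialFourierSum (tentPhase ε α β n) N 0‖
  rw [partialFourierSum_tentPhase_zero α β n hε0 hεπ (by linarith) (by linarith), norm_mul,
    show ‖(1 / (2 * Real.pi) : ℂ)‖ = 1 / (2 * Real.pi) by simp [abs_of_pos Real.pi_pos]]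
  calc _ ≤ 1 / (2 * Real.pi) * (Real.log (n * α / 2) - 3 * α / (|β| - α) - 12 / √ε) := by
        rw [mul_sub _ _ (12 / √ε)]
        linarith
    _ ≤ _ := by
        gcongr
        exact le_trans (by gcongr) (sub_sub_abs_sub_norm_le_norm_I_mul_add _ _ _)
end

section
/- Let φ : 𝕋 → 𝕋 be a continuous map such that for every f ∈ A(𝕋) the composition f∘φ belongs to U(𝕋). Then sup_{n∈ℤ} ‖e^{inφ}‖_{U(𝕋)} < ∞. -/
open MeasureTheory Filter

/-!
Identify `A(𝕋)` with `ℓ¹(ℤ)` through `a ↦ f_a = ∑ₖ aₖ e^{ikx}`. For fixed `N` and `t`, the map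
`a ↦ S_N(f_a ∘ φ)(t)` is a continuous linear functional on `ℓ¹(ℤ)`, and the hypothesis says that
for every `a` these functionals are bounded uniformly in `(N, t)`. By Banach–Steinhaus their norms
are uniformly bounded, and evaluating at the unit vectors `e_n`, for which `f_{e_n} ∘ φ = e^{inφ}`,
bounds `‖e^{inφ}‖_U` uniformly in `n`.
-/

open Complex BoundedContinuousFunction
open scoped Real lp

lemma norm_fourierCoef_le {g : ℝ → ℂ} {C : ℝ} (hg : ∀ t, ‖g t‖ ≤ C) (k : ℤ) :
    ‖fourierCoef g k‖ ≤ C := by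
  have hint : ‖∫ t in -π..π, g t * exp (-k * I * t)‖ ≤ C * (2 * π) := by
    have := intervalIntegral.norm_integral_le_of_norm_le_const (a := -π) (b := π)
      (f := fun t ↦ g t * exp (-k * I * t)) fun t _ ↦ by simpa [norm_exp] using hg t
    rwa [sub_neg_eq_add, ← two_mul, abs_of_pos Real.two_pi_pos] at this
  rw [fourierCoef, norm_mul]
  calc ‖(1 / (2 * π) : ℂ)‖ * ‖∫ t in -π..π, g t * exp (-k * I * t)‖
      ≤ 1 / (2 * π) * (C * (2 * π)) := by
        gcongr
        simp [abs_of_pos Real.pi_pos]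
    _ = C := by field_simp

lemma fourierCoef_add {u v : ℝ → ℂ} (hu : IntervalIntegrable u volume (-π) π)
    (hv : IntervalIntegrable v volume (-π) π) (k : ℤ) :
    fourierCoef (u + v) k = fourierCoef u k + fourierCoef v k := by
  have hexp : ContinuousOn (fun t : ℝ ↦ exp (-k * I * t)) (Set.uIcc (-π) π) := by fun_prop
  simp only [fourierCoef, Pi.add_apply, add_mul, ← mul_add]
  rw [intervalIntegral.integral_add (hu.mul_continuousOn hexp) (hv.mul_continuousOn hexp)]

lemma fourierCoef_const_smul (c : ℂ) (u : ℝ → ℂ) (k : ℤ) :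
    fourierCoef (c • u) k = c * fourierCoef u k := by
  simp only [fourierCoef, Pi.smul_apply, smul_eq_mul, mul_assoc,
    intervalIntegral.integral_const_mul]
  ring

noncomputable def fourierCoefCLM (k : ℤ) : (ℝ →ᵇ ℂ) →L[ℂ] ℂ :=
  LinearMap.mkContinuous
    { toFun f := fourierCoef f k
      map_add' f g := fourierCoef_add (f.continuous.intervalIntegrable _ _)
        (g.continuous.intervalIntegrable _ _) k
      map_smul' c f := fourierCoef_const_smul c f k }
    1 fun f ↦ by simpa using norm_fourierCoef_le f.norm_coe_le_norm k

noncomputable def partialFourierSumCLM (N : ℕ) (t : ℝ) : (ℝ →ᵇ ℂ) →L[ℂ] ℂ :=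
  ∑ k ∈ Finset.Icc (-(N : ℤ)) N, exp (k * I * t) • fourierCoefCLM k

lemma partialFourierSumCLM_apply (N : ℕ) (t : ℝ) (f : ℝ →ᵇ ℂ) :
    partialFourierSumCLM N t f = partialFourierSum f N t := by
  simp [partialFourierSumCLM, partialFourierSum, fourierCoefCLM, mul_comm]

lemma norm_partialFourierSum_le {g : ℝ → ℂ} {C : ℝ} (hg : ∀ t, ‖g t‖ ≤ C) (N : ℕ) (t : ℝ) :
    ‖partialFourierSum g N t‖ ≤ (2 * N + 1) * C := by
  have hcard : ((Finset.Icc (-(N : ℤ)) N).card : ℝ) = 2 * N + 1 := by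
    rw [Int.card_Icc, show (N : ℤ) + 1 - -N = ((2 * N + 1 : ℕ) : ℤ) by push_cast; ring,
      Int.toNat_natCast]
    push_cast; ring
  calc ‖partialFourierSum g N t‖
      ≤ ∑ k ∈ Finset.Icc (-(N : ℤ)) N, ‖fourierCoef g k * exp (k * I * t)‖ := norm_sum_le _ _
    _ ≤ ∑ _k ∈ Finset.Icc (-(N : ℤ)) N, C :=
        Finset.sum_le_sum fun k _ ↦ by simpa [norm_exp] using norm_fourierCoef_le hg k
    _ = (2 * N + 1) * C := by rw [Finset.sum_const, nsmul_eq_mul, hcard]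

/-- Uniform convergence controls the partial sums of large index, and the crude bound
`‖S_N g‖ ≤ (2N + 1) sup ‖g‖` the finitely many others. -/
lemma exists_bound_partialFourierSum {g : ℝ → ℂ} {C : ℝ} (hg : ∀ t, ‖g t‖ ≤ C)
    (hconv : TendstoUniformly (fun N t ↦ partialFourierSum g N t) g atTop) :
    ∃ C', ∀ N t, ‖partialFourierSum g N t‖ ≤ C' := by
  obtain ⟨N₀, hN₀⟩ := eventually_atTop.mp (Metric.tendstoUniformly_iff.mp hconv 1 one_pos)
  refine ⟨max ((2 * N₀ + 1) * C) (C + 1), fun N t ↦ ?_⟩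
  rcases le_or_gt N₀ N with hN | hN
  · calc ‖partialFourierSum g N t‖ ≤ ‖g t‖ + dist (g t) (partialFourierSum g N t) := by
          rw [dist_comm, dist_eq_norm]; exact norm_le_insert' _ _
      _ ≤ C + 1 := add_le_add (hg t) (hN₀ N hN t).le
      _ ≤ _ := le_max_right _ _
  · have hC : 0 ≤ C := (norm_nonneg _).trans (hg 0)
    calc ‖partialFourierSum g N t‖ ≤ (2 * N + 1) * C := norm_partialFourierSum_le hg N t
      _ ≤ (2 * N₀ + 1) * C := by gcongr
      _ ≤ _ := le_max_left _ _

lemma uNorm_le {f : ℝ → ℂ} {C : ℝ} (hf : ∀ N t, ‖partialFourierSum f N t‖ ≤ C) :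
    uNorm f ≤ C :=
  have hC : 0 ≤ C := (norm_nonneg _).trans (hf 0 0)
  Real.iSup_le (fun N ↦ Real.iSup_le (hf N) hC) hC

lemma integral_exp_intCast_mul_I (m : ℤ) :
    ∫ t in -π..π, exp (m * I * t) = if m = 0 then 2 * π else 0 := by
  split_ifs with hm
  · simp [hm]; ring
  have hmI : (m : ℂ) * I ≠ 0 := mul_ne_zero (Int.cast_ne_zero.mpr hm) I_ne_zero
  have hperiod : (m : ℂ) * I * π = m * I * (-π : ℝ) + m * (2 * π * I) := by push_cast; ring
  rw [integral_exp_mul_complex hmI, hperiod, exp_add, exp_int_mul_two_pi_mul_I, mul_one, sub_self,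
    zero_div, ofReal_zero]

section AbsolutelyConvergentSeries

variable (a : ℓ¹(ℤ, ℂ))

lemma summable_norm_lp_one : Summable fun k ↦ ‖a k‖ := by
  simpa using (lp.memℓp a).summable (p := 1) one_pos

/-- The element of `A(𝕋)` with Fourier coefficients `a`. -/
noncomputable def fourierSeriesOfLpOne (x : ℝ) : ℂ :=
  ∑' k : ℤ, a k * exp (k * I * x)

lemma summable_fourierSeriesOfLpOne (x : ℝ) :
    Summable fun k : ℤ ↦ a k * exp (k * I * x) :=
  .of_norm (by simpa [norm_exp] using summable_norm_lp_one a)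

lemma norm_fourierSeriesOfLpOne_le (x : ℝ) : ‖fourierSeriesOfLpOne a x‖ ≤ ‖a‖ := by
  calc ‖fourierSeriesOfLpOne a x‖ ≤ ∑' k : ℤ, ‖a k * exp (k * I * x)‖ :=
        norm_tsum_le_tsum_norm (summable_fourierSeriesOfLpOne a x).norm
    _ = ‖a‖ := by simpa [norm_exp] using (lp.norm_eq_tsum_rpow (p := 1) (by simp) a).symm

lemma continuous_fourierSeriesOfLpOne : Continuous (fourierSeriesOfLpOne a) :=
  continuous_tsum (fun _ ↦ by fun_prop) (summable_norm_lp_one a) fun _ _ ↦ by simp [norm_exp]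

lemma periodic_fourierSeriesOfLpOne : Function.Periodic (fourierSeriesOfLpOne a) (2 * π) := by
  intro x
  have hexp (k : ℤ) : exp (k * I * ↑(x + 2 * π)) = exp (k * I * x) := by
    rw [show (k : ℂ) * I * ↑(x + 2 * π) = k * I * x + k * (2 * π * I) by push_cast; ring,
      exp_add, exp_int_mul_two_pi_mul_I, mul_one]
  simp only [fourierSeriesOfLpOne, hexp]

lemma fourierCoef_fourierSeriesOfLpOne (n : ℤ) : fourierCoef (fourierSeriesOfLpOne a) n = a n := by
  have hterm (k : ℤ) : ∫ t in -π..π, a k * exp (k * I * t) * exp (-n * I * t) =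
      if k = n then 2 * π * a n else 0 := by
    have hexp (t : ℝ) :
        a k * exp (k * I * t) * exp (-n * I * t) = a k * exp ((k - n : ℤ) * I * t) := by
      rw [mul_assoc, ← exp_add]; push_cast; ring_nf
    simp only [hexp, intervalIntegral.integral_const_mul, integral_exp_intCast_mul_I, sub_eq_zero]
    split_ifs with hk
    · subst hk; push_cast; ring
    · simp
  have hsum : HasSum (fun k ↦ ∫ t in -π..π, a k * exp (k * I * t) * exp (-n * I * t))
      (∫ t in -π..π, fourierSeriesOfLpOne a t * exp (-n * I * t)) :=
    intervalIntegral.hasSum_integral_of_dominated_convergence (fun k _ ↦ ‖a k‖)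
      (fun _ ↦ by fun_prop) (fun _ ↦ ae_of_all _ fun _ _ ↦ by simp [norm_exp])
      (ae_of_all _ fun _ _ ↦ summable_norm_lp_one a) intervalIntegrable_const
      (ae_of_all _ fun t _ ↦ (summable_fourierSeriesOfLpOne a t).hasSum.mul_right _)
  simp only [hterm] at hsum
  rw [fourierCoef, ← (hasSum_ite_eq n (2 * π * a n : ℂ)).unique hsum]
  field_simp

lemma fourierSeriesOfLpOne_single (n : ℤ) (x : ℝ) :
    fourierSeriesOfLpOne (lp.single 1 n 1) x = exp (n * I * x) := by
  rw [fourierSeriesOfLpOne, tsum_eq_single n fun k hk ↦ by simp [hk]]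
  simp

noncomputable def fourierSeriesCLM : ℓ¹(ℤ, ℂ) →L[ℂ] ℝ →ᵇ ℂ :=
  LinearMap.mkContinuous
    { toFun a := .ofNormedAddCommGroup (fourierSeriesOfLpOne a)
        (continuous_fourierSeriesOfLpOne a) ‖a‖ (norm_fourierSeriesOfLpOne_le a)
      map_add' a b := by
        ext x
        simp only [coe_add, Pi.add_apply, coe_ofNormedAddCommGroup, fourierSeriesOfLpOne,
          lp.coeFn_add, add_mul]
        exact (summable_fourierSeriesOfLpOne a x).tsum_add (summable_fourierSeriesOfLpOne b x)
      map_smul' c a := by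
        ext x
        simp only [BoundedContinuousFunction.coe_smul, coe_ofNormedAddCommGroup,
          fourierSeriesOfLpOne, lp.coeFn_smul, Pi.smul_apply, smul_eq_mul, mul_assoc,
          RingHom.id_apply, tsum_mul_left] }
    1 fun a ↦ by simpa using norm_ofNormedAddCommGroup_le _ (norm_nonneg a) _

end AbsolutelyConvergentSeries

theorem superposition_implies_bounded_uNorm_general (φ : ℝ → ℝ) (hcont : Continuous φ)
    (hsup : ∀ f : ℝ → ℂ, Continuous f → Function.Periodic f (2 * Real.pi) →
      Summable (fun k : ℤ => ‖fourierCoef f k‖) →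
      TendstoUniformly (fun N t => partialFourierSum (f ∘ φ) N t) (f ∘ φ) atTop) :
    ∃ C : ℝ, ∀ n : ℤ, uNorm (fun t => Complex.exp (Complex.I * (n : ℂ) * (φ t))) ≤ C := by
  let T (p : ℕ × ℝ) : ℓ¹(ℤ, ℂ) →L[ℂ] ℂ := (partialFourierSumCLM p.1 p.2).comp
    ((compContinuousCLM ℂ ℂ ⟨φ, hcont⟩).comp fourierSeriesCLM)
  have hT (p : ℕ × ℝ) (a : ℓ¹(ℤ, ℂ)) :
      T p a = partialFourierSum (fourierSeriesOfLpOne a ∘ φ) p.1 p.2 := by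
    simp only [T, ContinuousLinearMap.comp_apply, compContinuousCLM_apply,
      partialFourierSumCLM_apply]
    rfl
  have hbdd (a : ℓ¹(ℤ, ℂ)) : ∃ C, ∀ p, ‖T p a‖ ≤ C := by
    have hcoef : Summable fun k ↦ ‖fourierCoef (fourierSeriesOfLpOne a) k‖ := by
      simpa only [fourierCoef_fourierSeriesOfLpOne] using summable_norm_lp_one a
    have hconv := hsup (fourierSeriesOfLpOne a) (continuous_fourierSeriesOfLpOne a)
      (periodic_fourierSeriesOfLpOne a) hcoef
    obtain ⟨C, hC⟩ := exists_bound_partialFourierSum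
      (fun t ↦ norm_fourierSeriesOfLpOne_le a (φ t)) hconv
    exact ⟨C, fun p ↦ (hT p a).symm ▸ hC p.1 p.2⟩
  obtain ⟨C, hC⟩ := banach_steinhaus hbdd
  refine ⟨C, fun n ↦ uNorm_le fun N t ↦ ?_⟩
  have hexp : (fun t ↦ exp (I * n * φ t)) = fourierSeriesOfLpOne (lp.single 1 n 1) ∘ φ := by
    ext t; rw [Function.comp_apply, fourierSeriesOfLpOne_single, mul_comm I]
  calc ‖partialFourierSum (fun t ↦ exp (I * n * φ t)) N t‖
      = ‖T (N, t) (lp.single 1 n 1)‖ := by rw [hexp, hT]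
    _ ≤ ‖T (N, t)‖ * ‖(lp.single 1 n 1 : ℓ¹(ℤ, ℂ))‖ := (T (N, t)).le_opNorm _
    _ ≤ C := by simpa [lp.norm_single] using hC (N, t)

theorem superposition_implies_bounded_uNorm (φ : ℝ → ℝ) (hcont : Continuous φ)
    (hper : ∀ t : ℝ, ∃ k : ℤ, φ (t + 2 * Real.pi) = φ t + 2 * Real.pi * k)
    (hsup : ∀ f : ℝ → ℂ, Continuous f → Function.Periodic f (2 * Real.pi) →
      Summable (fun k : ℤ => ‖fourierCoef f k‖) →
      TendstoUniformly (fun N t => partialFourierSum (f ∘ φ) N t) (f ∘ φ) atTop) :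
    ∃ C : ℝ, ∀ n : ℤ, uNorm (fun t => Complex.exp (Complex.I * (n : ℂ) * (φ t))) ≤ C :=
  superposition_implies_bounded_uNorm_general φ hcont hsup
end

section
/- For a real number a ≥ 2 and N = ⌊a⌋ − 1, one has |Σ_{1 ≤ |k| ≤ N} 1/(a−k)| ≥ log(a/2) − 1. -/
/-!
All terms with `k ≤ -1` are positive, so the sum is at least its part over `1 ≤ k ≤ N`.
By `log x ≤ x - 1`, each `1 / (a - k)` dominates `log (a - k + 1) - log (a - k)`, and these
telescope to `log a - log (a - N)`, which is at least `log (a / 2)` because `a - N < 2`.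
-/

open Real Finset

lemma log_add_one_sub_log_le_one_div {b : ℝ} (hb : 0 < b) : log (b + 1) - log b ≤ 1 / b := by
  rw [← log_div (by positivity) hb.ne']
  calc log ((b + 1) / b) ≤ (b + 1) / b - 1 := log_le_sub_one_of_pos (by positivity)
    _ = 1 / b := by field_simp; ring

lemma log_sub_log_sub_le_sum_Icc {a : ℝ} {m : ℤ} (hm : 0 ≤ m) (ham : m < a) :
    log a - log (a - m) ≤ ∑ k ∈ Icc 1 m, 1 / (a - k) := by
  induction m, hm using Int.leInduction with
  | base => simp
  | succ m hm ih =>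
    push_cast at ham
    have hstep := log_add_one_sub_log_le_one_div (b := a - (m + 1)) (by linarith)
    rw [show a - (m + 1) + 1 = a - m by ring] at hstep
    rw [← insert_Icc_right_eq_Icc_add_one (by omega), sum_insert (by simp)]
    push_cast
    linarith [ih (by linarith)]

lemma sum_Icc_one_le_sum_punctured_Icc {a : ℝ} (ha : -1 ≤ a) (N : ℤ) :
    ∑ k ∈ Icc 1 N, 1 / (a - k) ≤ ∑ k ∈ (Icc (-N) N).erase 0, 1 / (a - (k : ℝ)) := by
  refine sum_le_sum_of_subset_of_nonneg ?_ fun k hk hk' => ?_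
  · intro k hk
    simp only [mem_Icc, mem_erase] at hk ⊢
    omega
  · have hk_neg : k ≤ -1 := by
      simp only [mem_Icc, mem_erase] at hk hk'
      omega
    have : (k : ℝ) ≤ -1 := by exact_mod_cast hk_neg
    exact one_div_nonneg.2 (by linarith)

theorem punctured_harmonic_sum_lower_bound (a : ℝ) (ha : 2 ≤ a) (N : ℤ) (hNdef : N = ⌊a⌋ - 1) :
    Real.log (a / 2) - 1 ≤ |∑ k ∈ (Finset.Icc (-N) N).erase 0, 1 / (a - (k : ℝ))| := by
  have hN : 0 ≤ N := by
    have : (2 : ℤ) ≤ ⌊a⌋ := Int.le_floor.2 (by exact_mod_cast ha)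
    omega
  have hNR : (N : ℝ) = ⌊a⌋ - 1 := by exact_mod_cast hNdef
  have hNa : (N : ℝ) < a := by linarith [Int.floor_le a]
  have haN : a - N ≤ 2 := by linarith [Int.lt_floor_add_one a]
  have hlog : log (a / 2) ≤ log a - log (a - N) := by
    rw [log_div (by positivity) two_ne_zero]
    linarith [log_le_log (by linarith) haN]
  calc log (a / 2) - 1 ≤ log a - log (a - N) := by linarith
    _ ≤ ∑ k ∈ Icc 1 N, 1 / (a - k) := log_sub_log_sub_le_sum_Icc hN hNa
    _ ≤ ∑ k ∈ (Icc (-N) N).erase 0, 1 / (a - (k : ℝ)) :=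
      sum_Icc_one_le_sum_punctured_Icc (by linarith) N
    _ ≤ _ := le_abs_self _
end

section
/- Let 0 < ε < π, α > 0, and let φ be defined on (−ε, ε) by φ(t) = αt for t ∈ (−ε,0] and φ(t) = −αt for t ∈ [0,ε). Let Δ_ε(t) = max(0, 1−|t|/ε). Then for every integer n with nα ≥ 2 and N = ⌊nα⌋ − 1, |S_N(Δ_ε e^{inφ})(0)| ≥ (1/2π)log(nα/2) − 4ε^{−1/2}. -/
open MeasureTheory Filter

noncomputable def rr (ε lam : ℝ) : ℂ :=
  (1 - Complex.exp (-(lam:ℂ)*Complex.I*(ε:ℂ))) / ((lam:ℂ)^2*(ε:ℂ))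

lemma I_formula (ε lam : ℝ) (hε : 0 < ε) (hlam : 0 < lam) :
    (∫ t in (0:ℝ)..ε, (1 - (t:ℂ)/(ε:ℂ)) * Complex.exp (-(lam:ℂ)*Complex.I*(t:ℂ)))
      = -Complex.I * ((lam⁻¹ : ℝ):ℂ) + rr ε lam := by
  have hεc : (ε:ℂ) ≠ 0 := by exact_mod_cast hε.ne'
  have hlc : (lam:ℂ) ≠ 0 := by exact_mod_cast hlam.ne'
  have hI : Complex.I ≠ 0 := Complex.I_ne_zero
  set F : ℝ → ℂ := fun t =>
    (1 - (t:ℂ)/(ε:ℂ)) * Complex.exp (-(lam:ℂ)*Complex.I*(t:ℂ)) / (-(lam:ℂ)*Complex.I)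
      - Complex.exp (-(lam:ℂ)*Complex.I*(t:ℂ)) / ((ε:ℂ)*(lam:ℂ)^2) with hF
  have hderiv : ∀ t ∈ Set.uIcc (0:ℝ) ε, HasDerivAt F
      ((1 - (t:ℂ)/(ε:ℂ)) * Complex.exp (-(lam:ℂ)*Complex.I*(t:ℂ))) t := by
    intro t _
    have hexp : HasDerivAt (fun t:ℝ => Complex.exp (-(lam:ℂ)*Complex.I*(t:ℂ)))
        ((-(lam:ℂ)*Complex.I) * Complex.exp (-(lam:ℂ)*Complex.I*(t:ℂ))) t := by
      have := (((hasDerivAt_id (t:ℂ)).const_mul (-(lam:ℂ)*Complex.I)).cexp).comp_ofReal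
      simpa [mul_comm] using this
    have hlin : HasDerivAt (fun t:ℝ => (1 - (t:ℂ)/(ε:ℂ))) (-(1/(ε:ℂ))) t := by
      have : HasDerivAt (fun z:ℂ => (1 - z/(ε:ℂ))) (-(1/(ε:ℂ))) (t:ℂ) := by
        simpa using ((hasDerivAt_id (t:ℂ)).div_const (ε:ℂ)).const_sub 1
      exact this.comp_ofReal
    have := ((hlin.mul hexp).div_const (-(lam:ℂ)*Complex.I)).sub
      (hexp.div_const ((ε:ℂ)*(lam:ℂ)^2))
    convert this using 1 <;> try rfl
    field_simp
    ring_nf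
    simp only [Complex.I_sq]
    ring
  have hint : IntervalIntegrable
      (fun t:ℝ => (1 - (t:ℂ)/(ε:ℂ)) * Complex.exp (-(lam:ℂ)*Complex.I*(t:ℂ))) volume 0 ε := by
    apply Continuous.intervalIntegrable
    fun_prop
  have := intervalIntegral.integral_eq_sub_of_hasDerivAt hderiv hint
  rw [this, hF]
  simp only [Complex.ofReal_zero, mul_zero, Complex.exp_zero, rr]
  push_cast
  field_simp
  ring_nf
  simp only [Complex.I_sq, Complex.inv_I]
  field_simp

lemma one_sub_cos_le (θ : ℝ) (hθ : 0 ≤ θ) : 1 - Real.cos θ ≤ θ := by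
  rcases le_or_gt θ 2 with h | h
  · have := Real.one_sub_sq_div_two_le_cos (x := θ)
    nlinarith
  · have := Real.neg_one_le_cos θ
    linarith

lemma chord (θ : ℝ) (hθ : 0 ≤ θ) :
    ‖1 - Complex.exp (((-θ:ℝ):ℂ)*Complex.I)‖ ≤ Real.sqrt (2*θ) := by
  rw [Complex.exp_mul_I]
  have hc : Complex.cos ((-θ:ℝ):ℂ) = ((Real.cos θ : ℝ):ℂ) := by
    rw [← Complex.ofReal_cos]
    norm_num
  have hs : Complex.sin ((-θ:ℝ):ℂ) = ((-Real.sin θ : ℝ):ℂ) := by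
    rw [← Complex.ofReal_sin]
    norm_num
  rw [hc, hs]
  have he : (1:ℂ) - (((Real.cos θ : ℝ):ℂ) + ((-Real.sin θ : ℝ):ℂ) * Complex.I)
      = ((1 - Real.cos θ : ℝ):ℂ) + ((Real.sin θ : ℝ):ℂ) * Complex.I := by
    push_cast; ring
  rw [he, Complex.norm_add_mul_I]
  apply Real.sqrt_le_sqrt
  have h1 := one_sub_cos_le θ hθ
  nlinarith [Real.sin_sq_add_cos_sq θ, Real.cos_le_one θ]

lemma rr_norm (ε lam : ℝ) (hε : 0 < ε) (hlam : 0 < lam) :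
    ‖rr ε lam‖ ≤ Real.sqrt 2 / Real.sqrt ε * ((lam * Real.sqrt lam)⁻¹) := by
  obtain ⟨a, ha, rfl⟩ : ∃ a, 0 < a ∧ a*a = lam :=
    ⟨Real.sqrt lam, Real.sqrt_pos.2 hlam, Real.mul_self_sqrt hlam.le⟩
  obtain ⟨b, hb, rfl⟩ : ∃ b, 0 < b ∧ b*b = ε :=
    ⟨Real.sqrt ε, Real.sqrt_pos.2 hε, Real.mul_self_sqrt hε.le⟩
  have harg : -(((a*a:ℝ)):ℂ)*Complex.I*((b*b:ℝ):ℂ) = ((-((a*a)*(b*b)):ℝ):ℂ)*Complex.I := by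
    push_cast; ring
  have hch := chord ((a*a)*(b*b)) (by positivity)
  have hden : ‖(((a*a:ℝ)):ℂ)^2*((b*b:ℝ):ℂ)‖ = (a*a)^2*(b*b) := by
    rw [norm_mul, norm_pow, Complex.norm_real, Complex.norm_real,
      Real.norm_of_nonneg (by positivity), Real.norm_of_nonneg (by positivity)]
  rw [rr, norm_div, harg, hden]
  have hsq : Real.sqrt (2*((a*a)*(b*b))) = Real.sqrt 2 * (a*b) := by
    rw [show 2*((a*a)*(b*b)) = 2*(a*b)^2 by ring, Real.sqrt_mul (by norm_num),
      Real.sqrt_sq (by positivity)]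
  rw [Real.sqrt_mul_self ha.le, Real.sqrt_mul_self hb.le]
  calc ‖1 - Complex.exp (((-((a*a)*(b*b)):ℝ):ℂ)*Complex.I)‖ / ((a*a)^2*(b*b))
      ≤ (Real.sqrt 2 * (a*b)) / ((a*a)^2*(b*b)) := by
        rw [← hsq]; gcongr
    _ = Real.sqrt 2 / b * ((a*a)*a)⁻¹ := by field_simp

lemma log_sum (d : ℝ) (hd : 1 ≤ d) (M : ℕ) :
    Real.log (d + M) - Real.log d ≤ ∑ j ∈ Finset.range M, (d + j)⁻¹ := by
  induction M with
  | zero => simp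
  | succ m ih =>
    rw [Finset.sum_range_succ]
    have hdm : (0:ℝ) < d + m := by positivity
    have key : Real.log (d + (m+1)) - Real.log (d + m) ≤ (d + m)⁻¹ := by
      rw [← Real.log_div (by positivity) hdm.ne']
      have h2 := Real.log_le_sub_one_of_pos (x := (d+(m+1))/(d+m)) (by positivity)
      have h3 : (d+(m+1))/(d+m) - 1 = (d+m)⁻¹ := by field_simp; ring
      linarith
    push_cast
    push_cast at ih key
    linarith

lemma pow32_step (m : ℕ) (hm : 1 ≤ m) :
    ((1+(m:ℝ)) * Real.sqrt (1+(m:ℝ)))⁻¹ ≤ 2/Real.sqrt m - 2/Real.sqrt (m+1) := by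
  set u := Real.sqrt (m:ℝ) with hu
  set v := Real.sqrt ((m:ℝ)+1) with hv
  have hm1 : (1:ℝ) ≤ (m:ℝ) := by exact_mod_cast hm
  have hu0 : 0 < u := Real.sqrt_pos.2 (by linarith)
  have hv0 : 0 < v := Real.sqrt_pos.2 (by linarith)
  have huv : u ≤ v := Real.sqrt_le_sqrt (by linarith)
  have hu2 : u*u = (m:ℝ) := Real.mul_self_sqrt (by linarith)
  have hv2 : v*v = (m:ℝ)+1 := Real.mul_self_sqrt (by linarith)
  have h2 : (v-u)*(v+u) = 1 := by nlinarith
  have h4 : u*v*(u+v) ≤ 2*(v*v*v) := by nlinarith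
  have h5 : u*v ≤ 2*(v-u)*(v*v*v) := by
    have h3 : 2*(v-u)*(v*v*v) * (u+v) = 2*(v*v*v) := by linear_combination (2*(v*v*v)) * h2
    have := h4.trans_eq h3.symm
    exact le_of_mul_le_mul_right (by linarith [this]) (by linarith : (0:ℝ) < u + v)
  have hrw : (1+(m:ℝ)) = v*v := by linarith
  rw [hrw, show Real.sqrt (v*v) = v from Real.sqrt_mul_self hv0.le]
  rw [div_sub_div _ _ hu0.ne' hv0.ne', inv_eq_one_div,
    div_le_div_iff₀ (by positivity) (by positivity)]
  nlinarith [h5]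

lemma pow32_sum (M : ℕ) :
    ∑ j ∈ Finset.range M, ((1+(j:ℝ)) * Real.sqrt (1+(j:ℝ)))⁻¹ ≤ 3 := by
  have key : ∀ M : ℕ, 1 ≤ M →
      ∑ j ∈ Finset.range M, ((1+(j:ℝ)) * Real.sqrt (1+(j:ℝ)))⁻¹ ≤ 3 - 2/Real.sqrt M := by
    intro M hM
    induction M, hM using Nat.le_induction with
    | base => norm_num
    | succ m hm ih =>
      rw [Finset.sum_range_succ]
      have hstep := pow32_step m hm
      push_cast
      push_cast at ih hstep
      linarith
  rcases Nat.eq_zero_or_pos M with h | h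
  · simp [h]
  · have := key M h
    have h2 : 0 < Real.sqrt M := Real.sqrt_pos.2 (by exact_mod_cast h)
    have : 0 ≤ 2/Real.sqrt M := by positivity
    linarith [key M h]

lemma sum_Icc_reindex {M : Type*} [AddCommMonoid M] (N : ℕ) (g : ℤ → M) :
    ∑ k ∈ Finset.Icc (-(N:ℤ)) (N:ℤ), g k = ∑ j ∈ Finset.range (2*N+1), g ((N:ℤ) - j) := by
  apply Finset.sum_nbij' (i := fun k => ((N:ℤ) - k).toNat) (j := fun j => (N:ℤ) - j)
  · intro a ha
    simp only [Finset.mem_Icc] at ha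
    simp only [Finset.mem_range]
    omega
  · intro a ha
    simp only [Finset.mem_range] at ha
    simp only [Finset.mem_Icc]
    omega
  · intro a ha
    simp only [Finset.mem_Icc] at ha
    omega
  · intro a ha
    simp only [Finset.mem_range] at ha
    omega
  · intro a ha
    simp only [Finset.mem_Icc] at ha
    congr 1
    omega

lemma sum_Icc_neg {M : Type*} [AddCommMonoid M] (N : ℕ) (g : ℤ → M) :
    ∑ k ∈ Finset.Icc (-(N:ℤ)) (N:ℤ), g (-k) = ∑ k ∈ Finset.Icc (-(N:ℤ)) (N:ℤ), g k := by
  apply Finset.sum_nbij' (i := fun k => -k) (j := fun k => -k)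
  · intro a ha; simp only [Finset.mem_Icc] at *; omega
  · intro a ha; simp only [Finset.mem_Icc] at *; omega
  · intro a _; ring
  · intro a _; ring
  · intro a _; norm_num

lemma coef_eq (ε α : ℝ) (hε0 : 0 < ε) (hεπ : ε < Real.pi) (n : ℤ) (k : ℤ)
    (h1 : 0 < (n:ℝ)*α - k) (h2 : 0 < (n:ℝ)*α + k) :
    fourierCoef (fun t => ((max 0 (1 - |t| / ε) : ℝ) : ℂ) *
        Complex.exp (Complex.I * (n : ℂ) * (if t ≤ 0 then α * t else -α * t : ℝ))) k
    = (1/(2*Real.pi)) *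
        ((-Complex.I * ((((n:ℝ)*α - k)⁻¹ : ℝ):ℂ) + rr ε ((n:ℝ)*α - k))
        + (-Complex.I * ((((n:ℝ)*α + k)⁻¹ : ℝ):ℂ) + rr ε ((n:ℝ)*α + k))) := by
  set c : ℝ := (n:ℝ)*α with hc
  set h : ℝ → ℂ := fun t => ((max 0 (1 - |t| / ε) : ℝ) : ℂ) *
      Complex.exp (-(c:ℂ)*Complex.I*(|t|:ℝ)) * Complex.exp (-(k:ℂ)*Complex.I*(t:ℝ)) with hh
  have hcont : Continuous h := by
    apply Continuous.mul
    apply Continuous.mul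
    · exact Complex.continuous_ofReal.comp
        (continuous_const.max (continuous_const.sub (continuous_abs.div_const ε)))
    · exact Complex.continuous_exp.comp
        ((continuous_const.mul (Complex.continuous_ofReal.comp continuous_abs)))
    · exact Complex.continuous_exp.comp (continuous_const.mul Complex.continuous_ofReal)
  have hrw : ∀ t : ℝ, (((max 0 (1 - |t| / ε) : ℝ) : ℂ) *
      Complex.exp (Complex.I * (n : ℂ) * (if t ≤ 0 then α * t else -α * t : ℝ)))
      * Complex.exp (-(k : ℂ) * Complex.I * t) = h t := by
    intro t
    by_cases ht : t ≤ 0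
    · simp only [hh, if_pos ht, abs_of_nonpos ht, hc]
      push_cast
      ring_nf
    · simp only [hh, if_neg ht, abs_of_pos (lt_of_not_ge ht), hc]
      push_cast
      ring_nf
  have hint : ∀ a b : ℝ, IntervalIntegrable h volume a b :=
    fun a b => hcont.intervalIntegrable a b
  have key : (∫ t in (-Real.pi)..Real.pi, h t) =
      (∫ t in (0:ℝ)..ε, (1 - (t:ℂ)/(ε:ℂ)) * Complex.exp (-((c-k:ℝ):ℂ)*Complex.I*(t:ℂ)))
      + (∫ t in (0:ℝ)..ε, (1 - (t:ℂ)/(ε:ℂ)) * Complex.exp (-((c+k:ℝ):ℂ)*Complex.I*(t:ℂ))) := by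
    have z1 : (∫ t in (-Real.pi)..(-ε), h t) = 0 := by
      have he : Set.EqOn h (fun _ => (0:ℂ)) (Set.uIcc (-Real.pi) (-ε)) := by
        intro t htm
        rw [Set.uIcc_of_le (by linarith)] at htm
        have ha : ε ≤ |t| := by
          rw [abs_of_nonpos (by linarith [htm.2])]; linarith [htm.2]
        have hm : max 0 (1 - |t|/ε) = 0 := by
          apply max_eq_left
          have := (one_le_div hε0).mpr ha
          linarith
        simp [hh, hm]
      rw [intervalIntegral.integral_congr he, intervalIntegral.integral_zero]
    have z2 : (∫ t in ε..Real.pi, h t) = 0 := by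
      have he : Set.EqOn h (fun _ => (0:ℂ)) (Set.uIcc ε Real.pi) := by
        intro t htm
        rw [Set.uIcc_of_le (le_of_lt hεπ)] at htm
        have ha : ε ≤ |t| := by
          rw [abs_of_nonneg (by linarith [htm.1])]; exact htm.1
        have hm : max 0 (1 - |t|/ε) = 0 := by
          apply max_eq_left
          have := (one_le_div hε0).mpr ha
          linarith
        simp [hh, hm]
      rw [intervalIntegral.integral_congr he, intervalIntegral.integral_zero]
    have d1 := intervalIntegral.integral_add_adjacent_intervals
      (hint (-Real.pi) (-ε)) (hint (-ε) Real.pi)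
    have d2 := intervalIntegral.integral_add_adjacent_intervals
      (hint (-ε) ε) (hint ε Real.pi)
    have d3 := intervalIntegral.integral_add_adjacent_intervals
      (hint (-ε) 0) (hint 0 ε)
    have A : (∫ t in (0:ℝ)..ε, h t)
        = ∫ t in (0:ℝ)..ε, (1 - (t:ℂ)/(ε:ℂ)) * Complex.exp (-((c+k:ℝ):ℂ)*Complex.I*(t:ℂ)) := by
      apply intervalIntegral.integral_congr
      intro t htm
      rw [Set.uIcc_of_le (le_of_lt hε0)] at htm
      have habs : |t| = t := abs_of_nonneg htm.1
      have hmax : max 0 (1 - t/ε) = 1 - t/ε := by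
        apply max_eq_right
        have : t/ε ≤ 1 := (div_le_one hε0).mpr htm.2
        linarith
      simp only [hh, habs, hmax, hc]
      rw [mul_assoc, ← Complex.exp_add]
      push_cast
      ring_nf
    have B : (∫ t in (-ε)..(0:ℝ), h t)
        = ∫ t in (0:ℝ)..ε, (1 - (t:ℂ)/(ε:ℂ)) * Complex.exp (-((c-k:ℝ):ℂ)*Complex.I*(t:ℂ)) := by
      have hcn := intervalIntegral.integral_comp_neg (a := (0:ℝ)) (b := ε) (fun t => h t)
      rw [neg_zero] at hcn
      rw [← hcn]
      apply intervalIntegral.integral_congr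
      intro t htm
      rw [Set.uIcc_of_le (le_of_lt hε0)] at htm
      have habs : |(-t)| = t := by rw [abs_neg]; exact abs_of_nonneg htm.1
      have hmax : max 0 (1 - t/ε) = 1 - t/ε := by
        apply max_eq_right
        have : t/ε ≤ 1 := (div_le_one hε0).mpr htm.2
        linarith
      simp only [hh, habs, hmax, hc]
      rw [mul_assoc, ← Complex.exp_add]
      push_cast
      ring_nf
    rw [← d1, ← d2, ← d3, z1, z2, A, B]
    try ring
  unfold fourierCoef
  simp only [hrw]
  rw [key, I_formula ε (c-k) hε0 h1, I_formula ε (c+k) hε0 h2]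
  try push_cast
  try ring

lemma pfs_zero (f : ℝ → ℂ) (N : ℕ) :
    partialFourierSum f N 0 = ∑ k ∈ Finset.Icc (-(N : ℤ)) (N : ℤ), fourierCoef f k := by
  unfold partialFourierSum
  apply Finset.sum_congr rfl
  intro k _
  simp

theorem partial_sum_lower_bound_case_two (ε α : ℝ) (hε0 : 0 < ε) (hεπ : ε < Real.pi)
    (hα : 0 < α) (n : ℤ) (hna : 2 ≤ (n : ℝ) * α)
    (N : ℕ) (hN : (N : ℤ) = ⌊(n : ℝ) * α⌋ - 1) :
    (1 / (2 * Real.pi)) * Real.log ((n : ℝ) * α / 2) - 4 / Real.sqrt ε ≤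
      ‖partialFourierSum (fun t => ((max 0 (1 - |t| / ε) : ℝ) : ℂ) *
        Complex.exp (Complex.I * (n : ℂ) * (if t ≤ 0 then α * t else -α * t : ℝ))) N 0‖ := by
  set c : ℝ := (n:ℝ)*α with hc
  have hπ : 0 < Real.pi := Real.pi_pos
  have hfl : ((⌊c⌋:ℤ):ℝ) ≤ c := Int.floor_le c
  have hfl2 : c < ((⌊c⌋:ℤ):ℝ) + 1 := Int.lt_floor_add_one c
  have hNr : (N:ℝ) = ((⌊c⌋:ℤ):ℝ) - 1 := by exact_mod_cast hN
  have hd1 : 1 ≤ c - N := by linarith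
  have hd2 : c - N ≤ 2 := by linarith
  have hc0 : 0 < c := by linarith
  set K := Finset.Icc (-(N:ℤ)) (N:ℤ) with hK
  have hmem : ∀ k ∈ K, 0 < c - (k:ℝ) ∧ 0 < c + (k:ℝ) := by
    intro k hk
    rw [hK, Finset.mem_Icc] at hk
    have hk1 : ((k:ℤ):ℝ) ≤ ((N:ℤ):ℝ) := by exact_mod_cast hk.2
    have hk2 : -(((N:ℤ)):ℝ) ≤ ((k:ℤ):ℝ) := by
      have := hk.1
      exact_mod_cast this
    push_cast at hk1 hk2
    constructor <;> linarith
  rw [pfs_zero]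
  rw [Finset.sum_congr rfl (fun k hk => coef_eq ε α hε0 hεπ n k (hmem k hk).1 (hmem k hk).2)]
  rw [← Finset.mul_sum]
  set T : ℝ := ∑ k ∈ K, ((c - (k:ℝ))⁻¹ + (c + (k:ℝ))⁻¹) with hT
  set R : ℂ := ∑ k ∈ K, (rr ε (c - (k:ℝ)) + rr ε (c + (k:ℝ))) with hR
  have split : (∑ k ∈ K, ((-Complex.I * (((c - (k:ℝ))⁻¹ : ℝ):ℂ) + rr ε (c - (k:ℝ)))
        + (-Complex.I * (((c + (k:ℝ))⁻¹ : ℝ):ℂ) + rr ε (c + (k:ℝ)))))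
      = -Complex.I * (T:ℂ) + R := by
    rw [hT, hR]
    push_cast
    rw [Finset.mul_sum, ← Finset.sum_add_distrib]
    apply Finset.sum_congr rfl
    intro k _
    ring
  rw [split]
  -- norm lower bound
  have h4 : ‖-Complex.I * (T:ℂ)‖ = |T| := by
    rw [norm_mul, norm_neg, Complex.norm_I, one_mul, Complex.norm_real, Real.norm_eq_abs]
  have h3 := norm_sub_norm_le (-Complex.I * (T:ℂ)) (-R)
  rw [norm_neg, sub_neg_eq_add] at h3
  have hscal : ‖(1/(2*(Real.pi:ℂ))) * (-Complex.I * (T:ℂ) + R)‖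
      = (1/(2*Real.pi)) * ‖-Complex.I * (T:ℂ) + R‖ := by
    rw [norm_mul, norm_div, norm_one, norm_mul, Complex.norm_real,
      Real.norm_of_nonneg hπ.le]
    norm_num
  -- T lower bound
  have hTlow : Real.log (c/2) ≤ T := by
    have hS : ∑ k ∈ K, (c - (k:ℝ))⁻¹
        = ∑ j ∈ Finset.range (2*N+1), ((c - N) + (j:ℝ))⁻¹ := by
      rw [hK, sum_Icc_reindex N (fun k => (c - (k:ℝ))⁻¹)]
      apply Finset.sum_congr rfl
      intro j _
      congr 1
      push_cast
      ring
    have hlog := log_sum (c - N) hd1 (2*N+1)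
    have hmono : Real.log c ≤ Real.log ((c - N) + ((2*N+1 : ℕ):ℝ)) := by
      apply Real.log_le_log hc0
      push_cast; linarith
    have hlog2 : Real.log (c - N) ≤ Real.log 2 :=
      Real.log_le_log (by linarith) hd2
    have hlogdiv : Real.log (c/2) = Real.log c - Real.log 2 :=
      Real.log_div hc0.ne' (by norm_num)
    have hTge : ∑ k ∈ K, (c - (k:ℝ))⁻¹ ≤ T := by
      rw [hT]
      apply Finset.sum_le_sum
      intro k hk
      have h0 : (0:ℝ) < c + k := (hmem k hk).2
      have h0' : (0:ℝ) ≤ (c + (k:ℝ))⁻¹ := by positivity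
      linarith
    rw [hS] at hTge
    linarith
  -- R bound
  have hsε : (0:ℝ) < Real.sqrt ε := Real.sqrt_pos.2 hε0
  have hRbound : ‖R‖ ≤ 6*Real.sqrt 2/Real.sqrt ε := by
    have step1 : ‖R‖ ≤ ∑ k ∈ K, (‖rr ε (c - (k:ℝ))‖ + ‖rr ε (c + (k:ℝ))‖) :=
      (norm_sum_le K _).trans (Finset.sum_le_sum fun k _ => norm_add_le _ _)
    have step2 : ∑ k ∈ K, ‖rr ε (c + (k:ℝ))‖ = ∑ k ∈ K, ‖rr ε (c - (k:ℝ))‖ := by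
      rw [hK, ← sum_Icc_neg N (fun k => ‖rr ε (c + (k:ℝ))‖)]
      apply Finset.sum_congr rfl
      intro k _
      congr 2
      push_cast
      ring
    have step3 : ∑ k ∈ K, ‖rr ε (c - (k:ℝ))‖ ≤ 3*Real.sqrt 2/Real.sqrt ε := by
      rw [hK, sum_Icc_reindex N (fun k => ‖rr ε (c - (k:ℝ))‖)]
      have hterm : ∀ j ∈ Finset.range (2*N+1), ‖rr ε (c - (((N:ℤ) - (j:ℤ) : ℤ):ℝ))‖ ≤
          Real.sqrt 2/Real.sqrt ε * ((1+(j:ℝ)) * Real.sqrt (1+(j:ℝ)))⁻¹ := by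
        intro j _
        have hval : (c - (((N:ℤ) - (j:ℤ) : ℤ):ℝ)) = (c - N) + (j:ℝ) := by push_cast; ring
        rw [hval]
        have hj0 : (0:ℝ) ≤ (j:ℝ) := Nat.cast_nonneg j
        have hlamj : 1 + (j:ℝ) ≤ (c - N) + (j:ℝ) := by linarith
        have hpos1 : (0:ℝ) < 1 + (j:ℝ) := by linarith
        calc ‖rr ε ((c - N) + (j:ℝ))‖
            ≤ Real.sqrt 2/Real.sqrt ε * (((c-N)+(j:ℝ)) * Real.sqrt ((c-N)+(j:ℝ)))⁻¹ :=
              rr_norm _ _ hε0 (by linarith)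
          _ ≤ Real.sqrt 2/Real.sqrt ε * ((1+(j:ℝ)) * Real.sqrt (1+(j:ℝ)))⁻¹ := by
              apply mul_le_mul_of_nonneg_left _ (by positivity)
              apply inv_anti₀ (by positivity)
              exact mul_le_mul hlamj (Real.sqrt_le_sqrt hlamj) (Real.sqrt_nonneg _) (by linarith)
      calc ∑ j ∈ Finset.range (2*N+1), ‖rr ε (c - (((N:ℤ) - (j:ℤ) : ℤ):ℝ))‖
          ≤ ∑ j ∈ Finset.range (2*N+1),
              Real.sqrt 2/Real.sqrt ε * ((1+(j:ℝ)) * Real.sqrt (1+(j:ℝ)))⁻¹ :=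
            Finset.sum_le_sum hterm
        _ = Real.sqrt 2/Real.sqrt ε *
              ∑ j ∈ Finset.range (2*N+1), ((1+(j:ℝ)) * Real.sqrt (1+(j:ℝ)))⁻¹ :=
            (Finset.mul_sum _ _ _).symm
        _ ≤ Real.sqrt 2/Real.sqrt ε * 3 :=
            mul_le_mul_of_nonneg_left (pow32_sum _) (by positivity)
        _ = 3*Real.sqrt 2/Real.sqrt ε := by ring
    have hsplit : ∑ k ∈ K, (‖rr ε (c - (k:ℝ))‖ + ‖rr ε (c + (k:ℝ))‖)
        = ∑ k ∈ K, ‖rr ε (c - (k:ℝ))‖ + ∑ k ∈ K, ‖rr ε (c + (k:ℝ))‖ :=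
      Finset.sum_add_distrib
    rw [hsplit, step2] at step1
    calc ‖R‖ ≤ _ := step1
      _ ≤ 3*Real.sqrt 2/Real.sqrt ε + 3*Real.sqrt 2/Real.sqrt ε := add_le_add step3 step3
      _ = 6*Real.sqrt 2/Real.sqrt ε := by ring
  -- final numeric bound
  have hfinal : (1/(2*Real.pi)) * ‖R‖ ≤ 4 / Real.sqrt ε := by
    have hsqrt2 : Real.sqrt 2 ≤ 2 := by
      nlinarith [Real.sq_sqrt (by norm_num : (0:ℝ) ≤ 2), Real.sqrt_nonneg 2]
    have hπ3 : (3:ℝ) ≤ Real.pi := by linarith [Real.pi_gt_three]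
    have h6 : 6*Real.sqrt 2/Real.sqrt ε ≤ 12/Real.sqrt ε := by
      gcongr
      linarith
    have hmm : (1:ℝ)/(2*Real.pi) ≤ 1/6 := by
      rw [div_le_div_iff₀ (by positivity) (by norm_num)]
      linarith
    calc (1/(2*Real.pi)) * ‖R‖ ≤ (1/6) * (12/Real.sqrt ε) :=
          mul_le_mul hmm (hRbound.trans h6) (norm_nonneg R) (by norm_num)
      _ = 2/Real.sqrt ε := by ring
      _ ≤ 4/Real.sqrt ε := by gcongr <;> norm_num
  -- conclude
  rw [hscal]
  have hchain : T - ‖R‖ ≤ ‖-Complex.I * (T:ℂ) + R‖ := by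
    have hTabs : T ≤ |T| := le_abs_self T
    rw [h4] at h3
    linarith
  have hmul : (1/(2*Real.pi)) * (T - ‖R‖) ≤ (1/(2*Real.pi)) * ‖-Complex.I * (T:ℂ) + R‖ :=
    mul_le_mul_of_nonneg_left hchain (by positivity)
  have hmul2 : (1/(2*Real.pi)) * Real.log (c/2) ≤ (1/(2*Real.pi)) * T :=
    mul_le_mul_of_nonneg_left hTlow (by positivity)
  nlinarith [hfinal, hmul, hmul2]
end
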